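/- arXiv:cs/0603124 — 5 statements merged into one kernel-verified Lean document; each statement's English description precedes it below -/
import Mathlib

section
/- Let m, n be positive integers, q := min(m,n), and fix i with 1 ≤ i ≤ q. Let T : (1,∞) → (m×m nonsingular complex matrices) and M : (1,∞) → (m×n complex matrices) be families such that lim_{s→∞} log σ₁(T(s))/log s = 0 and lim_{s→∞} log η₁(T(s))/log s = 0, where σ₁ and η₁ denote the largest and smallest singular values. If σ_i(M(s)) > 0 for all s and lim_{s→∞} log σ_i(M(s))/log s = e for some real e, then lim_{s→∞} log σ_i(T(s)·M(s))/log s = e. -/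
/-- The (unordered) singular values of a complex matrix `M`: the square roots of the
eigenvalues of `Mᴴ M`. -/
noncomputable def svUnordered {m n : ℕ} (M : Matrix (Fin m) (Fin n) ℂ) : Fin n → ℝ :=
  fun i => Real.sqrt ((Matrix.isHermitian_conjTranspose_mul_self M).eigenvalues i)

/-- `sigma M i` is the `i`-th largest singular value of `M` (`i` is 0-indexed, so
`sigma M 0` is the largest singular value). -/
noncomputable def sigma {m n : ℕ} (M : Matrix (Fin m) (Fin n) ℂ) (i : Fin n) : ℝ :=
  (svUnordered M ∘ Tuple.sort (svUnordered M)) i.rev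

/-- `eta M i` is the `i`-th smallest singular value of `M` (`i` is 0-indexed, so
`eta M 0` is the smallest singular value). -/
noncomputable def eta {m n : ℕ} (M : Matrix (Fin m) (Fin n) ℂ) (i : Fin n) : ℝ :=
  (svUnordered M ∘ Tuple.sort (svUnordered M)) i

namespace SVAux2
open Matrix Finset Module

noncomputable def toE {m : ℕ} (y : Fin m → ℂ) : EuclideanSpace ℂ (Fin m) :=
  (WithLp.equiv 2 (Fin m → ℂ)).symm y

local notation "⟪" x ", " y "⟫" => @inner ℂ _ _ x y

lemma inner_toE {n : ℕ} (x y : Fin n → ℂ) : ⟪toE x, toE y⟫ = dotProduct (star x) y := by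
  simp [toE, PiLp.inner_apply, dotProduct, mul_comm]

lemma toE_apply_eq {n : ℕ} (x : EuclideanSpace ℂ (Fin n)) : toE (WithLp.equiv 2 (Fin n → ℂ) x) = x := by
  simp [toE]

lemma repr_mulVec {n : ℕ} {H : Matrix (Fin n) (Fin n) ℂ} (hH : H.IsHermitian)
    (x : Fin n → ℂ) (j : Fin n) :
    hH.eigenvectorBasis.repr (toE (H *ᵥ x)) j
      = hH.eigenvalues j * hH.eigenvectorBasis.repr (toE x) j := by
  set b := hH.eigenvectorBasis
  set w : Fin n → ℂ := WithLp.equiv 2 (Fin n → ℂ) (b j) with hw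
  have hbj : toE w = b j := toE_apply_eq _
  rw [OrthonormalBasis.repr_apply_apply, OrthonormalBasis.repr_apply_apply, ← hbj,
    inner_toE, inner_toE]
  have hHw : H *ᵥ w = (hH.eigenvalues j : ℂ) • w := by
    have h2 := hH.mulVec_eigenvectorBasis j
    rw [RCLike.real_smul_eq_coe_smul (K := ℂ)] at h2
    exact h2
  calc star w ⬝ᵥ (H *ᵥ x) = (star w ᵥ* H) ⬝ᵥ x := by rw [Matrix.dotProduct_mulVec]
    _ = star (H *ᵥ w) ⬝ᵥ x := by rw [Matrix.star_mulVec, hH.eq]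
    _ = (hH.eigenvalues j : ℂ) * (star w ⬝ᵥ x) := by
        rw [hHw, star_smul, smul_dotProduct]
        simp [Complex.conj_ofReal, smul_eq_mul]


lemma dot_self_eq {m : ℕ} (w : Fin m → ℂ) :
    dotProduct (star w) w = ((∑ i, ‖w i‖ ^ 2 : ℝ) : ℂ) := by
  simp only [dotProduct, Pi.star_apply, RCLike.star_def, RCLike.conj_mul]
  push_cast
  rfl

lemma nrm_sq' {m : ℕ} (y : Fin m → ℂ) : (‖toE y‖ : ℝ) ^ 2 = ∑ i, ‖y i‖ ^ 2 := by
  rw [EuclideanSpace.norm_eq, Real.sq_sqrt (by positivity)]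
  simp [toE]

lemma nrm_mulVec_sq {m n : ℕ} (P : Matrix (Fin m) (Fin n) ℂ) (x : Fin n → ℂ) :
    ‖toE (P *ᵥ x)‖ ^ 2 = ∑ j, (Matrix.isHermitian_conjTranspose_mul_self P).eigenvalues j *
      ‖(Matrix.isHermitian_conjTranspose_mul_self P).eigenvectorBasis.repr (toE x) j‖ ^ 2 := by
  set hH := Matrix.isHermitian_conjTranspose_mul_self P with hhH
  set b := hH.eigenvectorBasis with hb
  have key : ((‖toE (P *ᵥ x)‖ ^ 2 : ℝ) : ℂ)
      = ((∑ j, hH.eigenvalues j * ‖b.repr (toE x) j‖ ^ 2 : ℝ) : ℂ) := by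
    have lhs : ((‖toE (P *ᵥ x)‖ ^ 2 : ℝ) : ℂ) = star (P *ᵥ x) ⬝ᵥ (P *ᵥ x) := by
      rw [nrm_sq', dot_self_eq]
    have e1 : star (P *ᵥ x) ⬝ᵥ (P *ᵥ x) = ⟪toE x, toE ((Pᴴ * P) *ᵥ x)⟫ := by
      rw [inner_toE, ← Matrix.mulVec_mulVec, Matrix.dotProduct_mulVec (star x) Pᴴ,
        ← Matrix.star_mulVec]
    have e2 : ⟪toE x, toE ((Pᴴ * P) *ᵥ x)⟫
        = ⟪b.repr (toE x), b.repr (toE ((Pᴴ * P) *ᵥ x))⟫ :=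
      (LinearIsometryEquiv.inner_map_map b.repr _ _).symm
    have e3 : ⟪b.repr (toE x), b.repr (toE ((Pᴴ * P) *ᵥ x))⟫
        = ∑ j, (starRingEnd ℂ) (b.repr (toE x) j) * (b.repr (toE ((Pᴴ * P) *ᵥ x)) j) := by
      rw [PiLp.inner_apply]
      simp [mul_comm]
    rw [lhs, e1, e2, e3]
    push_cast
    apply Finset.sum_congr rfl
    intro j _
    rw [repr_mulVec hH x j]
    set z := b.repr (toE x) j
    calc (starRingEnd ℂ) z * ((hH.eigenvalues j : ℂ) * z)
        = (hH.eigenvalues j : ℂ) * ((starRingEnd ℂ) z * z) := by ring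
      _ = _ := by rw [RCLike.conj_mul]; norm_cast; exact (Complex.ofReal_mul _ _).symm
  exact_mod_cast key


lemma sum_repr_sq {n : ℕ} (b : OrthonormalBasis (Fin n) ℂ (EuclideanSpace ℂ (Fin n)))
    (x : EuclideanSpace ℂ (Fin n)) : ∑ j, ‖b.repr x j‖ ^ 2 = ‖x‖ ^ 2 := by
  rw [← b.repr.norm_map x, EuclideanSpace.norm_eq, Real.sq_sqrt (by positivity)]

lemma repr_eq_zero {n : ℕ} (b : OrthonormalBasis (Fin n) ℂ (EuclideanSpace ℂ (Fin n)))
    (s : Finset (Fin n)) {x : EuclideanSpace ℂ (Fin n)}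
    (hx : x ∈ Submodule.span ℂ (⇑b '' ↑s)) {j : Fin n} (hj : j ∉ s) : b.repr x j = 0 := by
  rw [OrthonormalBasis.repr_apply_apply]
  induction hx using Submodule.span_induction with
  | mem y hy =>
    obtain ⟨i, hi, rfl⟩ := hy
    exact b.orthonormal.2 (fun h => hj (h ▸ hi))
  | zero => exact inner_zero_right _
  | add y z _ _ hy hz => rw [inner_add_right, hy, hz, add_zero]
  | smul c y _ hy => rw [inner_smul_right, hy, mul_zero]

lemma finrank_span_orthonormal {n : ℕ} (b : OrthonormalBasis (Fin n) ℂ (EuclideanSpace ℂ (Fin n)))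
    (s : Finset (Fin n)) :
    Module.finrank ℂ (Submodule.span ℂ (⇑b '' ↑s)) = s.card := by
  have h1 : ⇑b '' ↑s = Set.range (fun j : s => b j) := by
    ext y; simp
  have h2 : LinearIndependent ℂ (fun j : s => b j) :=
    b.orthonormal.linearIndependent.comp _ Subtype.val_injective
  rw [h1, finrank_span_eq_card h2]
  simp

lemma exists_nonzero_inf {n : ℕ} (S T : Submodule ℂ (EuclideanSpace ℂ (Fin n)))
    (h : n < Module.finrank ℂ S + Module.finrank ℂ T) :
    ∃ x : EuclideanSpace ℂ (Fin n), x ≠ 0 ∧ x ∈ S ∧ x ∈ T := by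
  have hne : S ⊓ T ≠ ⊥ := by
    intro hbot
    have h1 := Submodule.finrank_sup_add_finrank_inf_eq S T
    rw [hbot, finrank_bot] at h1
    have h2 : Module.finrank ℂ ↥(S ⊔ T) ≤ n := by
      have := Submodule.finrank_le (S ⊔ T)
      rwa [finrank_euclideanSpace_fin] at this
    omega
  obtain ⟨x, hx, hx0⟩ := Submodule.exists_mem_ne_zero_of_ne_bot hne
  exact ⟨x, hx0, (Submodule.mem_inf.1 hx).1, (Submodule.mem_inf.1 hx).2⟩


lemma svUnordered_nonneg {m n : ℕ} (M : Matrix (Fin m) (Fin n) ℂ) (i : Fin n) :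
    0 ≤ svUnordered M i := Real.sqrt_nonneg _

lemma sq_svUnordered {m n : ℕ} (M : Matrix (Fin m) (Fin n) ℂ) (i : Fin n) :
    svUnordered M i ^ 2 = (Matrix.isHermitian_conjTranspose_mul_self M).eigenvalues i :=
  Real.sq_sqrt (Matrix.eigenvalues_conjTranspose_mul_self_nonneg M i)

/-- If all singular values indexed by `s` are `≤ r`, then `‖P x‖ ≤ r ‖x‖` on the span
of the corresponding eigenvectors. -/
lemma nrm_mulVec_le {m n : ℕ} (P : Matrix (Fin m) (Fin n) ℂ) (s : Finset (Fin n)) {r : ℝ}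
    (hr : 0 ≤ r) (hs : ∀ j ∈ s, svUnordered P j ≤ r) {x : Fin n → ℂ}
    (hx : toE x ∈ Submodule.span ℂ
      (⇑(Matrix.isHermitian_conjTranspose_mul_self P).eigenvectorBasis '' ↑s)) :
    ‖toE (P *ᵥ x)‖ ≤ r * ‖toE x‖ := by
  set hH := Matrix.isHermitian_conjTranspose_mul_self P with hhH
  set b := hH.eigenvectorBasis with hb
  have hsq : ‖toE (P *ᵥ x)‖ ^ 2 ≤ (r * ‖toE x‖) ^ 2 := by
    rw [nrm_mulVec_sq, mul_pow, ← sum_repr_sq b (toE x), Finset.mul_sum]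
    apply Finset.sum_le_sum
    intro j _
    by_cases hj : j ∈ s
    · have h1 : hH.eigenvalues j ≤ r ^ 2 := by
        rw [← sq_svUnordered]
        exact pow_le_pow_left₀ (svUnordered_nonneg P j) (hs j hj) 2
      exact mul_le_mul_of_nonneg_right h1 (by positivity)
    · rw [repr_eq_zero b s hx hj]
      simp
  have h2 : 0 ≤ r * ‖toE x‖ := by positivity
  exact (pow_le_pow_iff_left₀ (norm_nonneg _) h2 (by norm_num)).1 hsq

/-- If all singular values indexed by `s` are `≥ r ≥ 0`, then `‖P x‖ ≥ r ‖x‖` on the span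
of the corresponding eigenvectors. -/
lemma nrm_mulVec_ge {m n : ℕ} (P : Matrix (Fin m) (Fin n) ℂ) (s : Finset (Fin n)) {r : ℝ}
    (hr : 0 ≤ r) (hs : ∀ j ∈ s, r ≤ svUnordered P j) {x : Fin n → ℂ}
    (hx : toE x ∈ Submodule.span ℂ
      (⇑(Matrix.isHermitian_conjTranspose_mul_self P).eigenvectorBasis '' ↑s)) :
    r * ‖toE x‖ ≤ ‖toE (P *ᵥ x)‖ := by
  set hH := Matrix.isHermitian_conjTranspose_mul_self P with hhH
  set b := hH.eigenvectorBasis with hb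
  have hsq : (r * ‖toE x‖) ^ 2 ≤ ‖toE (P *ᵥ x)‖ ^ 2 := by
    rw [nrm_mulVec_sq, mul_pow, ← sum_repr_sq b (toE x), Finset.mul_sum]
    apply Finset.sum_le_sum
    intro j _
    by_cases hj : j ∈ s
    · have h1 : r ^ 2 ≤ hH.eigenvalues j := by
        rw [← sq_svUnordered]
        exact pow_le_pow_left₀ hr (hs j hj) 2
      exact mul_le_mul_of_nonneg_right h1 (by positivity)
    · rw [repr_eq_zero b s hx hj]
      simp
  exact (pow_le_pow_iff_left₀ (by positivity) (norm_nonneg _) (by norm_num)).1 hsq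


/-- Key comparison: if `c ≥ 0` and `c‖Px‖ ≤ ‖Qx‖` for every vector `x`, then
`c · σᵢ(P) ≤ σᵢ(Q)` for every `i`. -/
lemma sigma_le_sigma {m m' n : ℕ} (P : Matrix (Fin m) (Fin n) ℂ)
    (Q : Matrix (Fin m') (Fin n) ℂ) {c : ℝ} (hc : 0 ≤ c)
    (h : ∀ x : Fin n → ℂ, c * ‖toE (P *ᵥ x)‖ ≤ ‖toE (Q *ᵥ x)‖) (i : Fin n) :
    c * sigma P i ≤ sigma Q i := by
  set k := i.rev with hk
  set σP := Tuple.sort (svUnordered P) with hσP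
  set σQ := Tuple.sort (svUnordered Q) with hσQ
  set bP := (Matrix.isHermitian_conjTranspose_mul_self P).eigenvectorBasis with hbP
  set bQ := (Matrix.isHermitian_conjTranspose_mul_self Q).eigenvectorBasis with hbQ
  set IP := Finset.image σP (Finset.Ici k) with hIP
  set IQ := Finset.image σQ (Finset.Iic k) with hIQ
  have hSP : Module.finrank ℂ (Submodule.span ℂ (⇑bP '' ↑IP)) = n - k := by
    rw [finrank_span_orthonormal, hIP, Finset.card_image_of_injective _ σP.injective,
      Fin.card_Ici]
  have hSQ : Module.finrank ℂ (Submodule.span ℂ (⇑bQ '' ↑IQ)) = k + 1 := by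
    rw [finrank_span_orthonormal, hIQ, Finset.card_image_of_injective _ σQ.injective,
      Fin.card_Iic]
  obtain ⟨x, hx0, hxP, hxQ⟩ := exists_nonzero_inf (Submodule.span ℂ (⇑bP '' ↑IP))
    (Submodule.span ℂ (⇑bQ '' ↑IQ)) (by rw [hSP, hSQ]; have := k.isLt; omega)
  set x0 : Fin n → ℂ := WithLp.equiv 2 (Fin n → ℂ) x with hx0def
  have hxE : toE x0 = x := toE_apply_eq x
  have hx0ne : x0 ≠ 0 := by
    intro h0
    apply hx0
    rw [← hxE, h0]
    simp [toE]
  have hxpos : 0 < ‖toE x0‖ := by rw [hxE]; exact norm_pos_iff.2 hx0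
  have hge : sigma P i * ‖toE x0‖ ≤ ‖toE (P *ᵥ x0)‖ := by
    apply nrm_mulVec_ge P IP (Real.sqrt_nonneg _) _ (hxE ▸ hxP)
    intro j hj
    rw [hIP, Finset.mem_image] at hj
    obtain ⟨j', hj', rfl⟩ := hj
    exact Tuple.monotone_sort (svUnordered P) (Finset.mem_Ici.1 hj')
  have hle : ‖toE (Q *ᵥ x0)‖ ≤ sigma Q i * ‖toE x0‖ := by
    apply nrm_mulVec_le Q IQ (Real.sqrt_nonneg _) _ (hxE ▸ hxQ)
    intro j hj
    rw [hIQ, Finset.mem_image] at hj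
    obtain ⟨j', hj', rfl⟩ := hj
    exact Tuple.monotone_sort (svUnordered Q) (Finset.mem_Iic.1 hj')
  have chain : (c * sigma P i) * ‖toE x0‖ ≤ (sigma Q i) * ‖toE x0‖ := by
    calc (c * sigma P i) * ‖toE x0‖ = c * (sigma P i * ‖toE x0‖) := by ring
      _ ≤ c * ‖toE (P *ᵥ x0)‖ := mul_le_mul_of_nonneg_left hge hc
      _ ≤ ‖toE (Q *ᵥ x0)‖ := h x0
      _ ≤ sigma Q i * ‖toE x0‖ := hle
  exact le_of_mul_le_mul_right chain hxpos


lemma span_univ_eq_top {m : ℕ} (b : OrthonormalBasis (Fin m) ℂ (EuclideanSpace ℂ (Fin m))) :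
    Submodule.span ℂ (⇑b '' ↑(Finset.univ : Finset (Fin m))) = ⊤ := by
  rw [Finset.coe_univ, Set.image_univ, ← b.coe_toBasis]
  exact b.toBasis.span_eq

lemma sv_le_sigma_zero {m : ℕ} (hm : 0 < m) (T : Matrix (Fin m) (Fin m) ℂ) (j : Fin m) :
    svUnordered T j ≤ sigma T ⟨0, hm⟩ := by
  set σT := Tuple.sort (svUnordered T) with hσT
  have h1 : svUnordered T j = (svUnordered T ∘ σT) (σT.symm j) := by simp
  rw [h1]
  apply Tuple.monotone_sort (svUnordered T)
  have h0 : ((⟨0, hm⟩ : Fin m) : ℕ) = 0 := rfl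
  rw [Fin.le_def, Fin.val_rev, h0]
  have := (σT.symm j).isLt
  omega

lemma eta_zero_le_sv {m : ℕ} (hm : 0 < m) (T : Matrix (Fin m) (Fin m) ℂ) (j : Fin m) :
    eta T ⟨0, hm⟩ ≤ svUnordered T j := by
  set σT := Tuple.sort (svUnordered T) with hσT
  have h1 : svUnordered T j = (svUnordered T ∘ σT) (σT.symm j) := by simp
  rw [h1]
  exact Tuple.monotone_sort (svUnordered T) (by rw [Fin.le_def]; exact Nat.zero_le _)

lemma nrm_mulVec_le_sigma {m : ℕ} (hm : 0 < m) (T : Matrix (Fin m) (Fin m) ℂ) (y : Fin m → ℂ) :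
    ‖toE (T *ᵥ y)‖ ≤ sigma T ⟨0, hm⟩ * ‖toE y‖ := by
  apply nrm_mulVec_le T Finset.univ (Real.sqrt_nonneg _)
    (fun j _ => sv_le_sigma_zero hm T j)
  rw [span_univ_eq_top]
  trivial

lemma eta_mul_le_nrm_mulVec {m : ℕ} (hm : 0 < m) (T : Matrix (Fin m) (Fin m) ℂ) (y : Fin m → ℂ) :
    eta T ⟨0, hm⟩ * ‖toE y‖ ≤ ‖toE (T *ᵥ y)‖ := by
  apply nrm_mulVec_ge T Finset.univ (Real.sqrt_nonneg _)
    (fun j _ => eta_zero_le_sv hm T j)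
  rw [span_univ_eq_top]
  trivial

lemma sv_pos_of_isUnit {m : ℕ} {T : Matrix (Fin m) (Fin m) ℂ} (hT : IsUnit T.det)
    (j : Fin m) : 0 < svUnordered T j := by
  rw [svUnordered, Real.sqrt_pos]
  rcases lt_or_eq_of_le (Matrix.eigenvalues_conjTranspose_mul_self_nonneg T j) with h | h
  · exact h
  · exfalso
    have hdet : (Tᴴ * T).det ≠ 0 := by
      rw [Matrix.det_mul, Matrix.det_conjTranspose]
      exact mul_ne_zero (star_ne_zero.2 hT.ne_zero) hT.ne_zero
    rw [(Matrix.isHermitian_conjTranspose_mul_self T).det_eq_prod_eigenvalues] at hdet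
    rw [Finset.prod_ne_zero_iff] at hdet
    exact hdet j (Finset.mem_univ j) (by rw [← h]; norm_cast)

lemma eta_zero_pos {m : ℕ} (hm : 0 < m) {T : Matrix (Fin m) (Fin m) ℂ} (hT : IsUnit T.det) :
    0 < eta T ⟨0, hm⟩ := sv_pos_of_isUnit hT _

lemma sigma_zero_pos {m : ℕ} (hm : 0 < m) {T : Matrix (Fin m) (Fin m) ℂ} (hT : IsUnit T.det) :
    0 < sigma T ⟨0, hm⟩ := sv_pos_of_isUnit hT _



end SVAux2

open Matrix Finset Module SVAux2 in
/-- **Proposition 1**: multiplication by a family of invertible matrices whose largest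
and smallest singular values both have high-SNR exponent `0` does not change the
high-SNR exponent of any singular value (index `i` is 0-indexed: `i < min m n`). -/
theorem sigma_mul_exponent_invariant {m n : ℕ} (hm : 0 < m) (hn : 0 < n)
    (i : Fin n) (hi : (i : ℕ) < min m n)
    (T : ℝ → Matrix (Fin m) (Fin m) ℂ) (M : ℝ → Matrix (Fin m) (Fin n) ℂ)
    (hTunit : ∀ s : ℝ, 1 < s → IsUnit (T s).det)
    (hσ1 : Filter.Tendsto (fun s : ℝ => Real.log (sigma (T s) ⟨0, hm⟩) / Real.log s)
      Filter.atTop (nhds 0))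
    (hη1 : Filter.Tendsto (fun s : ℝ => Real.log (eta (T s) ⟨0, hm⟩) / Real.log s)
      Filter.atTop (nhds 0))
    (hMpos : ∀ s : ℝ, 1 < s → 0 < sigma (M s) i) (e : ℝ)
    (hMe : Filter.Tendsto (fun s : ℝ => Real.log (sigma (M s) i) / Real.log s)
      Filter.atTop (nhds e)) :
    Filter.Tendsto (fun s : ℝ => Real.log (sigma (T s * M s) i) / Real.log s)
      Filter.atTop (nhds e) := by
  have key : ∀ s : ℝ, 1 < s →
      eta (T s) ⟨0, hm⟩ * sigma (M s) i ≤ sigma (T s * M s) i ∧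
      sigma (T s * M s) i ≤ sigma (T s) ⟨0, hm⟩ * sigma (M s) i := by
    intro s hs
    have hη := eta_zero_pos hm (hTunit s hs)
    have hσ := sigma_zero_pos hm (hTunit s hs)
    constructor
    · apply sigma_le_sigma (M s) (T s * M s) hη.le _ i
      intro x
      rw [← Matrix.mulVec_mulVec]
      exact eta_mul_le_nrm_mulVec hm (T s) (M s *ᵥ x)
    · have h2 : (sigma (T s) ⟨0, hm⟩)⁻¹ * sigma (T s * M s) i ≤ sigma (M s) i := by
        apply sigma_le_sigma (T s * M s) (M s) (inv_nonneg.2 hσ.le) _ i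
        intro x
        rw [← Matrix.mulVec_mulVec]
        calc (sigma (T s) ⟨0, hm⟩)⁻¹ * ‖toE (T s *ᵥ (M s *ᵥ x))‖
            ≤ (sigma (T s) ⟨0, hm⟩)⁻¹ * (sigma (T s) ⟨0, hm⟩ * ‖toE (M s *ᵥ x)‖) :=
              mul_le_mul_of_nonneg_left (nrm_mulVec_le_sigma hm (T s) (M s *ᵥ x))
                (inv_nonneg.2 hσ.le)
          _ = ‖toE (M s *ᵥ x)‖ := by field_simp
      have h3 := mul_le_mul_of_nonneg_left h2 hσ.le
      calc sigma (T s * M s) i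
          = sigma (T s) ⟨0, hm⟩ * ((sigma (T s) ⟨0, hm⟩)⁻¹ * sigma (T s * M s) i) := by
            field_simp
        _ ≤ sigma (T s) ⟨0, hm⟩ * sigma (M s) i := h3
  have lower : Filter.Tendsto (fun s : ℝ => Real.log (eta (T s) ⟨0, hm⟩) / Real.log s
      + Real.log (sigma (M s) i) / Real.log s) Filter.atTop (nhds e) := by
    have := hη1.add hMe
    rwa [zero_add] at this
  have upper : Filter.Tendsto (fun s : ℝ => Real.log (sigma (T s) ⟨0, hm⟩) / Real.log s
      + Real.log (sigma (M s) i) / Real.log s) Filter.atTop (nhds e) := by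
    have := hσ1.add hMe
    rwa [zero_add] at this
  apply tendsto_of_tendsto_of_tendsto_of_le_of_le' lower upper
  · filter_upwards [Filter.eventually_gt_atTop (1 : ℝ)] with s hs
    have hη := eta_zero_pos hm (hTunit s hs)
    have hf := hMpos s hs
    have hlog : (0 : ℝ) < Real.log s := Real.log_pos hs
    rw [← add_div]
    apply div_le_div_of_nonneg_right ?_ hlog.le
    rw [← Real.log_mul hη.ne' hf.ne']
    exact Real.log_le_log (mul_pos hη hf) (key s hs).1
  · filter_upwards [Filter.eventually_gt_atTop (1 : ℝ)] with s hs
    have hη := eta_zero_pos hm (hTunit s hs)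
    have hf := hMpos s hs
    have hF : 0 < sigma (T s * M s) i :=
      lt_of_lt_of_le (mul_pos hη hf) (key s hs).1
    have hlog : (0 : ℝ) < Real.log s := Real.log_pos hs
    rw [← add_div]
    apply div_le_div_of_nonneg_right ?_ hlog.le
    rw [← Real.log_mul (sigma_zero_pos hm (hTunit s hs)).ne' hf.ne']
    exact Real.log_le_log hF (key s hs).2
end

section
/- Let m ≥ n ≥ l ≥ 1 be integers and let k be an integer with 0 ≤ k ≤ l. Consider the function ε(α,β) := ∑_{i=1}^{l} (n−i+1)·α_i + ∑_{i=1}^{l} (m−n+l−i)·β_i + ∑_{1≤i<j≤l} max(α_i−β_j, 0) on pairs of vectors α, β ∈ ℝ^l. Then the infimum of ε(α,β) over the set { (α,β) : 0 ≤ β₁ ≤ ⋯ ≤ β_l, α₁ ≤ ⋯ ≤ α_l, β_i ≤ α_i for all i, and ∑_{i=1}^{l} max(1−α_i, 0) ≤ k } equals (l−k)(n−k) − ⌊(max(l−(m−n)−k, 0))² / 4⌋. -/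
open Finset

private lemma gaussR (z : ℕ) : ∑ q ∈ range z, (q : ℝ) = z * (z - 1) / 2 := by
  induction z with
  | zero => simp
  | succ w ih =>
    rw [Finset.sum_range_succ, ih]
    push_cast
    ring

private lemma sumRangeR (z : ℕ) (e : ℝ) :
    ∑ q ∈ range z, (e - (q : ℝ)) = z * e - z * ((z : ℝ) - 1) / 2 := by
  rw [Finset.sum_sub_distrib, Finset.sum_const, card_range, gaussR, nsmul_eq_mul]

private lemma sum_triangle_swap (l : ℕ) (F : ℕ → ℕ → ℝ) :
    ∑ v ∈ range l, ∑ w ∈ Ico (v + 1) l, F v w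
      = ∑ w ∈ range l, ∑ v ∈ range w, F v w := by
  induction l with
  | zero => simp
  | succ L ih =>
    rw [Finset.sum_range_succ (fun w => ∑ v ∈ range w, F v w),
      Finset.sum_range_succ (fun v => ∑ w ∈ Ico (v + 1) (L + 1), F v w), Finset.Ico_self]
    have h1 : ∀ v ∈ range L, ∑ w ∈ Ico (v + 1) (L + 1), F v w
        = ∑ w ∈ Ico (v + 1) L, F v w + F v L := by
      intro v hv
      rw [Finset.sum_Ico_succ_top (by simp at hv; omega)]
    rw [Finset.sum_congr rfl h1, Finset.sum_add_distrib, ih]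
    simp

private lemma sum_Ioi_to_Ico {l : ℕ} (i : Fin l) (g : ℕ → ℝ) :
    ∑ j ∈ Finset.Ioi i, g (j : ℕ) = ∑ w ∈ Finset.Ico ((i : ℕ) + 1) l, g w := by
  have h1 : Finset.Ioi i = Finset.univ.filter (fun j : Fin l => (i : ℕ) < (j : ℕ)) := by
    ext j
    simp only [Finset.mem_Ioi, Finset.mem_filter, Finset.mem_univ, true_and, Fin.lt_def]
  rw [h1, Finset.sum_filter]
  rw [Fin.sum_univ_eq_sum_range (fun v => if (i : ℕ) < v then g v else 0) l,
    ← Finset.sum_filter]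
  congr 1
  ext w
  simp only [Finset.mem_filter, Finset.mem_range, Finset.mem_Ico]
  omega

private lemma gstep (a : ℕ) :
    a / 2 * (a - a / 2) + (a + 1) / 2 = (a + 1) / 2 * ((a + 1) - (a + 1) / 2) := by
  rcases Nat.even_or_odd a with ⟨r, hr⟩ | ⟨r, hr⟩
  · subst hr
    have h1 : (r + r) / 2 = r := by omega
    have h2 : (r + r + 1) / 2 = r := by omega
    rw [h1, h2]
    have h3 : r + r - r = r := by omega
    have h4 : r + r + 1 - r = r + 1 := by omega
    rw [h3, h4]
    ring
  · subst hr
    have h1 : (2 * r + 1) / 2 = r := by omega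
    have h2 : (2 * r + 1 + 1) / 2 = r + 1 := by omega
    rw [h1, h2]
    have h3 : 2 * r + 1 - r = r + 1 := by omega
    have h4 : 2 * r + 1 + 1 - (r + 1) = r + 1 := by omega
    rw [h3, h4]
    ring

private lemma gsum (D : ℕ) : ∀ s : ℕ,
    ∑ u ∈ range s, (u + 1 - D) / 2
      = (s - D) / 2 * ((s - D) - (s - D) / 2)
  | 0 => by simp
  | (s + 1) => by
    rw [Finset.sum_range_succ, gsum D s]
    rcases le_or_gt D s with h | h
    · have h1 : s + 1 - D = (s - D) + 1 := by omega
      rw [h1, ← gstep (s - D)]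
    · have h1 : s + 1 - D = 0 := by omega
      have h2 : s - D = 0 := by omega
      simp [h1, h2]

private def cN (n l D v : ℕ) : ℕ := (n - v) + min (l - 1 - v) ((D + l - 1 - v) / 2)

private lemma cN_anti (n l D : ℕ) {a b : ℕ} (h : a ≤ b) : cN n l D b ≤ cN n l D a := by
  unfold cN; omega



private lemma master (n l D k : ℕ) (hk : k ≤ l) (hln : l ≤ n) :
    ∑ v ∈ Finset.Ico k l, (cN n l D v : ℝ)
      = ((l - k : ℕ) : ℝ) * ((n - k : ℕ) : ℝ)
        - ((((l - k - D) / 2) * ((l - k - D) - (l - k - D) / 2) : ℕ) : ℝ) := by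
  set s := l - k with hs
  set X := l - k - D with hX
  rw [Finset.sum_Ico_eq_sum_range]
  have hpt : ∀ q ∈ range (l - k), (cN n l D (k + q) : ℝ)
      = ((n - k - q : ℕ) : ℝ) + ((min (s - 1 - q) ((D + s - 1 - q) / 2) : ℕ) : ℝ) := by
    intro q hq
    simp only [Finset.mem_range] at hq
    have : cN n l D (k + q) = (n - k - q) + min (s - 1 - q) ((D + s - 1 - q) / 2) := by
      unfold cN; omega
    rw [this]; push_cast; ring
  rw [Finset.sum_congr rfl hpt, Finset.sum_add_distrib]
  have h1 : ∑ q ∈ range (l - k), ((n - k - q : ℕ) : ℝ)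
      = (s : ℝ) * ((n - k : ℕ) : ℝ) - s * ((s : ℝ) - 1) / 2 := by
    rw [← sumRangeR s ((n - k : ℕ) : ℝ)]
    apply Finset.sum_congr rfl
    intro q hq
    simp only [Finset.mem_range] at hq
    have hqle : q ≤ n - k := by omega
    rw [show (n - k - q : ℕ) = (n - k) - q from rfl, Nat.cast_sub hqle]
  -- second sum: reflect then compare with gauss minus gsum
  have h2 : ∑ q ∈ range (l - k), ((min (s - 1 - q) ((D + s - 1 - q) / 2) : ℕ) : ℝ)
      = s * ((s : ℝ) - 1) / 2 - ((X / 2 * (X - X / 2) : ℕ) : ℝ) := by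
    have hrefl : ∑ q ∈ range s, min (s - 1 - q) ((D + s - 1 - q) / 2)
        = ∑ u ∈ range s, min u ((D + u) / 2) := by
      rw [← Finset.sum_range_reflect (fun u => min u ((D + u) / 2)) s]
      apply Finset.sum_congr rfl
      intro q hq
      simp only [Finset.mem_range] at hq
      congr 1 <;> omega
    have hsplit : ∑ u ∈ range s, min u ((D + u) / 2)
        + ∑ u ∈ range s, (u + 1 - D) / 2 = ∑ u ∈ range s, u := by
      rw [← Finset.sum_add_distrib]
      apply Finset.sum_congr rfl
      intro u _
      omega
    have hXX : ∑ u ∈ range s, (u + 1 - D) / 2 = X / 2 * (X - X / 2) := gsum D s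
    have hmain : ∑ q ∈ range s, min (s - 1 - q) ((D + s - 1 - q) / 2)
        + X / 2 * (X - X / 2) = ∑ u ∈ range s, u := by
      rw [hrefl, ← hXX]; exact hsplit
    have := congrArg (fun z : ℕ => (z : ℝ)) hmain
    push_cast at this
    have hgauss : ∑ u ∈ range s, (u : ℝ) = s * ((s : ℝ) - 1) / 2 := gaussR s
    rw [hgauss] at this
    push_cast
    linarith [this]
  rw [h1, h2]
  push_cast
  ring


private lemma sqdiv (X : ℕ) : X * X / 4 = X / 2 * (X - X / 2) := by
  rcases Nat.even_or_odd X with ⟨r, hr⟩ | ⟨r, hr⟩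
  · subst hr
    have h1 : (r + r) / 2 = r := by omega
    have h2 : (r + r) * (r + r) = r * r * 4 := by ring
    rw [h1, h2, Nat.mul_div_cancel _ (by norm_num)]
    have h3 : r + r - r = r := by omega
    rw [h3]
  · subst hr
    have h1 : (2 * r + 1) / 2 = r := by omega
    have h2 : (2 * r + 1) * (2 * r + 1) = (r * r + r) * 4 + 1 := by ring
    rw [h1, h2]
    have h3 : ((r * r + r) * 4 + 1) / 4 = r * r + r := by omega
    rw [h3]
    have h4 : 2 * r + 1 - r = r + 1 := by omega
    rw [h4]; ring

private lemma rhs_eq (m n l k : ℕ) (hln : l ≤ n) (hnm : n ≤ m) (hk : k ≤ l) :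
    ((l - k : ℕ) : ℝ) * ((n - k : ℕ) : ℝ)
      - ((((l - k - (m - n)) / 2) * ((l - k - (m - n)) - (l - k - (m - n)) / 2) : ℕ) : ℝ)
    = ((l : ℝ) - k) * ((n : ℝ) - k)
      - (⌊(max ((l : ℝ) - ((m : ℝ) - n) - k) 0) ^ 2 / 4⌋ : ℝ) := by
  set X : ℕ := l - k - (m - n) with hX
  have hmax : max ((l : ℝ) - ((m : ℝ) - n) - k) 0 = (X : ℝ) := by
    rcases le_or_gt (m - n + k) l with h | h
    · have hXv : X = l - (m - n) - k := by omega
      have h0 : X + (m - n) + k = l := by omega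
      have : ((X : ℕ) : ℝ) = (l : ℝ) - ((m : ℝ) - n) - k := by
        have h1 := congrArg (fun z : ℕ => (z : ℝ)) h0
        push_cast [Nat.cast_sub hnm] at h1
        linarith
      rw [max_eq_left (by rw [← this]; positivity), this]
    · have hX0 : X = 0 := by omega
      have hneg : (l : ℝ) - ((m : ℝ) - n) - k < 0 := by
        have h1 : (((m - n : ℕ)) : ℝ) = (m : ℝ) - n := by
          push_cast [Nat.cast_sub hnm]; ring
        have : (l : ℝ) < ((m - n : ℕ) : ℝ) + k := by
          have : (l : ℕ) < (m - n) + k := by omega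
          exact_mod_cast this
        rw [h1] at this
        linarith
      rw [hX0, max_eq_right (le_of_lt hneg)]
      norm_num
  rw [hmax]
  have hfl : ⌊((X : ℝ)) ^ 2 / 4⌋ = ((X * X / 4 : ℕ) : ℤ) := by
    have h1 : ((X : ℝ)) ^ 2 / 4 = ((X * X : ℕ) : ℝ) / ((4 : ℕ) : ℝ) := by push_cast; ring
    rw [h1]
    rw [(Int.natCast_floor_eq_floor (a := ((X * X : ℕ) : ℝ) / ((4 : ℕ) : ℝ)) (by positivity)).symm,
      Nat.floor_div_eq_div]
  rw [sqdiv] at hfl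
  rw [hfl]
  have h2 : ((l - k : ℕ) : ℝ) = (l : ℝ) - k := by push_cast [Nat.cast_sub hk]; ring
  have h3 : ((n - k : ℕ) : ℝ) = (n : ℝ) - k := by push_cast [Nat.cast_sub (hk.trans hln)]; ring
  rw [h2, h3]
  rw [Int.cast_natCast]



private lemma lower_core (n l D k : ℕ) (hl : 0 < l) (hln : l ≤ n) (hk : k ≤ l)
    (A BP : ℕ → ℝ)
    (hA0 : ∀ v, 0 ≤ A v) (hA1 : ∀ v, A v ≤ 1) (hB0 : ∀ w, 0 ≤ BP w)
    (hSA : (l : ℝ) - k ≤ ∑ v ∈ range l, A v) :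
    ∑ v ∈ Ico k l, (cN n l D v : ℝ)
      ≤ ∑ v ∈ range l, ((n : ℝ) - v) * A v
        + ∑ w ∈ range l, ((D + l - 1 - w : ℕ) : ℝ) * BP w
        + ∑ v ∈ range l, ∑ w ∈ Ico (v + 1) l, max (A v - BP w) 0 := by
  -- Step 1: per-w elimination of BP
  have step5 : ∀ w ∈ range l,
      ∑ v ∈ Ico (w - (D + l - 1 - w)) w, A v
        ≤ ((D + l - 1 - w : ℕ) : ℝ) * BP w + ∑ v ∈ range w, max (A v - BP w) 0 := by
    intro w hw
    simp only [mem_range] at hw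
    set bw := D + l - 1 - w with hbw
    set T : Finset ℕ := Ico (w - bw) w with hT
    have hsub : T ⊆ range w := by
      intro v hv; simp only [hT, mem_Ico] at hv; simp only [mem_range]; omega
    have h51 : ∑ v ∈ T, max (A v - BP w) 0 ≤ ∑ v ∈ range w, max (A v - BP w) 0 :=
      Finset.sum_le_sum_of_subset_of_nonneg hsub (fun v _ _ => le_max_right _ _)
    have h52 : ∑ v ∈ T, (A v - BP w) ≤ ∑ v ∈ T, max (A v - BP w) 0 :=
      Finset.sum_le_sum (fun v _ => le_max_left _ _)
    have h53 : ∑ v ∈ T, (A v - BP w) = ∑ v ∈ T, A v - (T.card : ℝ) * BP w := by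
      rw [Finset.sum_sub_distrib, Finset.sum_const, nsmul_eq_mul]
    have h54 : (T.card : ℝ) ≤ ((bw : ℕ) : ℝ) := by
      have : T.card = w - (w - bw) := by rw [hT, Nat.card_Ico]
      have hle : T.card ≤ bw := by omega
      exact_mod_cast hle
    have h55 : (T.card : ℝ) * BP w ≤ ((bw : ℕ) : ℝ) * BP w :=
      mul_le_mul_of_nonneg_right h54 (hB0 w)
    linarith
  have h5 : ∑ w ∈ range l, ∑ v ∈ Ico (w - (D + l - 1 - w)) w, A v
      ≤ ∑ w ∈ range l, ((D + l - 1 - w : ℕ) : ℝ) * BP w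
        + ∑ w ∈ range l, ∑ v ∈ range w, max (A v - BP w) 0 := by
    rw [← Finset.sum_add_distrib]
    exact Finset.sum_le_sum step5
  -- Step 2: counting
  have step6 : ∑ w ∈ range l, ∑ v ∈ Ico (w - (D + l - 1 - w)) w, A v
      = ∑ v ∈ range l, ((min (l - 1 - v) ((D + l - 1 - v) / 2) : ℕ) : ℝ) * A v := by
    have e1 : ∀ w ∈ range l, ∑ v ∈ Ico (w - (D + l - 1 - w)) w, A v
        = ∑ v ∈ range w, (if w - (D + l - 1 - w) ≤ v then A v else 0) := by
      intro w _
      rw [← Finset.sum_filter]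
      apply Finset.sum_congr _ (fun v _ => rfl)
      ext v
      simp only [mem_Ico, mem_filter, mem_range]
      omega
    rw [Finset.sum_congr rfl e1, ← sum_triangle_swap l (fun v w => if w - (D + l - 1 - w) ≤ v then A v else 0)]
    apply Finset.sum_congr rfl
    intro v hv
    simp only [mem_range] at hv
    have e2 : ∀ w ∈ Ico (v + 1) l, (if w - (D + l - 1 - w) ≤ v then A v else 0)
        = (if w - (D + l - 1 - w) ≤ v then (1 : ℝ) else 0) * A v := by
      intro w _; split_ifs <;> ring
    rw [Finset.sum_congr rfl e2, ← Finset.sum_mul]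
    congr 1
    rw [Finset.sum_boole]
    have e3 : (Ico (v + 1) l).filter (fun w => w - (D + l - 1 - w) ≤ v)
        = Ico (v + 1) (min ((v + D + l - 1) / 2 + 1) l) := by
      ext w
      simp only [mem_filter, mem_Ico, lt_min_iff]
      omega
    rw [e3, Nat.card_Ico]
    congr 1
    omega
  -- Step 3: exchange argument
  have step8 : ∑ v ∈ Ico k l, (cN n l D v : ℝ) ≤ ∑ v ∈ range l, (cN n l D v : ℝ) * A v := by
    have hsplit : ∑ v ∈ range l, (cN n l D v : ℝ) * A v
        = ∑ v ∈ Ico 0 k, (cN n l D v : ℝ) * A v + ∑ v ∈ Ico k l, (cN n l D v : ℝ) * A v := by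
      rw [Finset.range_eq_Ico, ← Finset.sum_Ico_consecutive _ (Nat.zero_le k) hk]
    have hsplitA : ∑ v ∈ range l, A v = ∑ v ∈ Ico 0 k, A v + ∑ v ∈ Ico k l, A v := by
      rw [Finset.range_eq_Ico, ← Finset.sum_Ico_consecutive _ (Nat.zero_le k) hk]
    set ck : ℝ := (cN n l D k : ℝ) with hck
    have hck0 : (0 : ℝ) ≤ ck := by positivity
    have h81 : ck * ∑ v ∈ Ico 0 k, A v ≤ ∑ v ∈ Ico 0 k, (cN n l D v : ℝ) * A v := by
      rw [Finset.mul_sum]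
      apply Finset.sum_le_sum
      intro v hv
      simp only [mem_Ico] at hv
      have : ck ≤ (cN n l D v : ℝ) := by
        rw [hck]; exact_mod_cast cN_anti n l D (le_of_lt hv.2)
      exact mul_le_mul_of_nonneg_right this (hA0 v)
    have h82 : ∑ v ∈ Ico k l, (cN n l D v : ℝ) * (1 - A v)
        ≤ ck * ∑ v ∈ Ico k l, (1 - A v) := by
      rw [Finset.mul_sum]
      apply Finset.sum_le_sum
      intro v hv
      simp only [mem_Ico] at hv
      have hc : (cN n l D v : ℝ) ≤ ck := by rw [hck]; exact_mod_cast cN_anti n l D hv.1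
      have h1A : 0 ≤ 1 - A v := by linarith [hA1 v]
      exact mul_le_mul_of_nonneg_right hc h1A
    have h83 : ∑ v ∈ Ico k l, (cN n l D v : ℝ) * (1 - A v)
        = ∑ v ∈ Ico k l, (cN n l D v : ℝ) - ∑ v ∈ Ico k l, (cN n l D v : ℝ) * A v := by
      rw [← Finset.sum_sub_distrib]
      exact Finset.sum_congr rfl (fun v _ => by ring)
    have h85 : ∑ v ∈ Ico k l, ((1 : ℝ) - A v)
        = ((l - k : ℕ) : ℝ) - ∑ v ∈ Ico k l, A v := by
      rw [Finset.sum_sub_distrib, Finset.sum_const, Nat.card_Ico, nsmul_eq_mul, mul_one]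
    have hlk : ((l - k : ℕ) : ℝ) = (l : ℝ) - k := by
      push_cast [Nat.cast_sub hk]; ring
    have hfin : 0 ≤ ck * (∑ v ∈ range l, A v - ((l : ℝ) - k)) :=
      mul_nonneg hck0 (by linarith)
    nlinarith [hfin, h81, h82, h83, h85, hsplit, hsplitA]
  -- assemble
  have hcoef : ∀ v ∈ range l, (cN n l D v : ℝ) * A v
      = ((n : ℝ) - v) * A v + ((min (l - 1 - v) ((D + l - 1 - v) / 2) : ℕ) : ℝ) * A v := by
    intro v hv
    simp only [mem_range] at hv
    have : ((n - v : ℕ) : ℝ) = (n : ℝ) - v := by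
      push_cast [Nat.cast_sub (by omega : v ≤ n)]; ring
    rw [← add_mul, ← this]
    unfold cN
    push_cast
    ring
  have hmax : ∑ w ∈ range l, ∑ v ∈ range w, max (A v - BP w) 0
      = ∑ v ∈ range l, ∑ w ∈ Ico (v + 1) l, max (A v - BP w) 0 :=
    (sum_triangle_swap l _).symm
  calc ∑ v ∈ Ico k l, (cN n l D v : ℝ)
      ≤ ∑ v ∈ range l, (cN n l D v : ℝ) * A v := step8
    _ = ∑ v ∈ range l, ((n : ℝ) - v) * A v
        + ∑ v ∈ range l, ((min (l - 1 - v) ((D + l - 1 - v) / 2) : ℕ) : ℝ) * A v := by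
        rw [Finset.sum_congr rfl hcoef, Finset.sum_add_distrib]
    _ = ∑ v ∈ range l, ((n : ℝ) - v) * A v
        + ∑ w ∈ range l, ∑ v ∈ Ico (w - (D + l - 1 - w)) w, A v := by rw [step6]
    _ ≤ ∑ v ∈ range l, ((n : ℝ) - v) * A v
        + (∑ w ∈ range l, ((D + l - 1 - w : ℕ) : ℝ) * BP w
          + ∑ w ∈ range l, ∑ v ∈ range w, max (A v - BP w) 0) := by linarith [h5]
    _ = ∑ v ∈ range l, ((n : ℝ) - v) * A v
        + ∑ w ∈ range l, ((D + l - 1 - w : ℕ) : ℝ) * BP w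
        + ∑ v ∈ range l, ∑ w ∈ Ico (v + 1) l, max (A v - BP w) 0 := by rw [hmax]; ring


private lemma sumIcoR (a b : ℕ) (e : ℝ) :
    ∑ v ∈ Ico a b, (e - (v : ℝ))
      = ((b - a : ℕ) : ℝ) * (e - a) - ((b - a : ℕ) : ℝ) * (((b - a : ℕ) : ℝ) - 1) / 2 := by
  rw [Finset.sum_Ico_eq_sum_range, ← sumRangeR (b - a) (e - (a : ℝ))]
  exact Finset.sum_congr rfl fun q _ => by push_cast; ring

private def wA (k : ℕ) {l : ℕ} : Fin l → ℝ := fun i => if (i : ℕ) < k then 0 else 1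

private lemma witness_mem (m n l k : ℕ) (hl : 0 < l) (hln : l ≤ n) (hnm : n ≤ m) (hk : k ≤ l) :
    0 ≤ wA (l - (l - k - (m - n)) / 2) (⟨0, hl⟩ : Fin l) ∧
    Monotone (wA (l - (l - k - (m - n)) / 2) (l := l)) ∧
    Monotone (wA k (l := l)) ∧
    (∀ i : Fin l, wA (l - (l - k - (m - n)) / 2) i ≤ wA k i) ∧
    ∑ i : Fin l, max (1 - wA k i) 0 ≤ (k : ℝ) := by
  have hkc : k ≤ l - (l - k - (m - n)) / 2 := by omega
  refine ⟨?_, ?_, ?_, ?_, ?_⟩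
  · simp only [wA]; split_ifs <;> norm_num
  · intro a b hab; simp only [wA]
    have : (a : ℕ) ≤ (b : ℕ) := hab
    split_ifs <;> first | omega | norm_num
  · intro a b hab; simp only [wA]
    have : (a : ℕ) ≤ (b : ℕ) := hab
    split_ifs <;> first | omega | norm_num
  · intro i; simp only [wA]
    split_ifs with h1 h2 <;> first | omega | norm_num
  · have e1 : ∀ i : Fin l, max (1 - wA k (l := l) i) 0 = if (i : ℕ) < k then (1 : ℝ) else 0 := by
      intro i; simp only [wA]; split_ifs <;> norm_num
    rw [Finset.sum_congr rfl (fun i _ => e1 i)]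
    rw [Fin.sum_univ_eq_sum_range (fun v => if v < k then (1 : ℝ) else 0) l]
    rw [Finset.sum_boole]
    have : (range l).filter (fun v => v < k) = range k := by
      ext v; simp only [mem_filter, mem_range]; omega
    rw [this, card_range]

private lemma witness_value (m n l k : ℕ) (hl : 0 < l) (hln : l ≤ n) (hnm : n ≤ m) (hk : k ≤ l) :
    ∑ i : Fin l, ((n : ℝ) - (i : ℕ)) * wA k i +
      ∑ i : Fin l, ((m : ℝ) - n + l - 1 - (i : ℕ)) * wA (l - (l - k - (m - n)) / 2) i +
      ∑ i : Fin l, ∑ j ∈ Finset.Ioi i, max (wA k i - wA (l - (l - k - (m - n)) / 2) j) 0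
    = ((l - k : ℕ) : ℝ) * ((n - k : ℕ) : ℝ)
      - (((l - k - (m - n)) / 2 * ((l - k - (m - n)) - (l - k - (m - n)) / 2) : ℕ) : ℝ) := by
  set D : ℕ := m - n with hD
  set X : ℕ := l - k - D with hX
  set t : ℕ := X / 2 with ht
  have htX : t ≤ X := Nat.div_le_self _ _
  have hXs : X ≤ l - k := by omega
  have hkc : k ≤ l - t := by omega
  have hltl : l - t ≤ l := by omega
  have hlt1 : 1 ≤ l - t := by omega
  -- T1
  have E1 : ∑ i : Fin l, ((n : ℝ) - (i : ℕ)) * wA k i = ∑ v ∈ Ico k l, ((n : ℝ) - v) := by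
    unfold wA
    rw [Fin.sum_univ_eq_sum_range (fun v => ((n : ℝ) - v) * (if v < k then 0 else 1)) l]
    have e : ∀ v ∈ range l, ((n : ℝ) - v) * (if v < k then 0 else 1)
        = if k ≤ v then ((n : ℝ) - v) else 0 := by
      intro v _
      by_cases hv : v < k
      · rw [if_pos hv, if_neg (by omega), mul_zero]
      · rw [if_neg hv, if_pos (by omega), mul_one]
    rw [Finset.sum_congr rfl e, ← Finset.sum_filter]
    congr 1
    ext v; simp only [mem_filter, mem_range, mem_Ico]; omega
  -- T2
  have E2 : ∑ i : Fin l, ((m : ℝ) - n + l - 1 - (i : ℕ)) * wA (l - t) i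
      = ∑ v ∈ Ico (l - t) l, ((m : ℝ) - n + l - 1 - v) := by
    unfold wA
    rw [Fin.sum_univ_eq_sum_range
      (fun v => ((m : ℝ) - n + l - 1 - v) * (if v < l - t then 0 else 1)) l]
    have e : ∀ v ∈ range l, ((m : ℝ) - n + l - 1 - v) * (if v < l - t then 0 else 1)
        = if l - t ≤ v then ((m : ℝ) - n + l - 1 - v) else 0 := by
      intro v _
      by_cases hv : v < l - t
      · rw [if_pos hv, if_neg (by omega), mul_zero]
      · rw [if_neg hv, if_pos (by omega), mul_one]
    rw [Finset.sum_congr rfl e, ← Finset.sum_filter]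
    congr 1
    ext v; simp only [mem_filter, mem_range, mem_Ico]; omega
  -- T3
  have E3 : ∑ i : Fin l, ∑ j ∈ Finset.Ioi i, max (wA k i - wA (l - t) j) 0
      = ∑ v ∈ Ico k (l - t), (((l - t - 1 : ℕ) : ℝ) - v) := by
    unfold wA
    have e0 : ∀ i : Fin l, ∑ j ∈ Finset.Ioi i,
        max ((if (i : ℕ) < k then (0 : ℝ) else 1) - (if (j : ℕ) < l - t then 0 else 1)) 0
        = ∑ w ∈ Ico ((i : ℕ) + 1) l,
            max ((if (i : ℕ) < k then (0 : ℝ) else 1) - (if w < l - t then 0 else 1)) 0 := by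
      intro i
      exact sum_Ioi_to_Ico i
        (fun w => max ((if (i : ℕ) < k then (0 : ℝ) else 1) - (if w < l - t then 0 else 1)) 0)
    rw [Finset.sum_congr rfl (fun i _ => e0 i)]
    rw [Fin.sum_univ_eq_sum_range (fun v => ∑ w ∈ Ico (v + 1) l,
        max ((if v < k then (0 : ℝ) else 1) - (if w < l - t then 0 else 1)) 0) l]
    have e1 : ∀ v ∈ range l, ∑ w ∈ Ico (v + 1) l,
        max ((if v < k then (0 : ℝ) else 1) - (if w < l - t then 0 else 1)) 0
        = if k ≤ v then ((l - t - (v + 1) : ℕ) : ℝ) else 0 := by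
      intro v _
      have e2 : ∀ w ∈ Ico (v + 1) l,
          max ((if v < k then (0 : ℝ) else 1) - (if w < l - t then 0 else 1)) 0
          = if k ≤ v then (if w < l - t then (1 : ℝ) else 0) else 0 := by
        intro w _; split_ifs <;> norm_num <;> omega
      rw [Finset.sum_congr rfl e2]
      by_cases hkv : k ≤ v
      · simp only [hkv, if_true]
        rw [Finset.sum_boole]
        have e3 : (Ico (v + 1) l).filter (fun w => w < l - t) = Ico (v + 1) (l - t) := by
          ext w; simp only [mem_filter, mem_Ico]; omega
        rw [e3, Nat.card_Ico]
      · simp [hkv]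
    rw [Finset.sum_congr rfl e1, ← Finset.sum_filter]
    have e4 : (range l).filter (fun v => k ≤ v) = Ico k l := by
      ext v; simp only [mem_filter, mem_range, mem_Ico]; omega
    rw [e4, ← Finset.sum_Ico_consecutive
        (fun v => ((l - t - (v + 1) : ℕ) : ℝ)) hkc hltl]
    have e5 : ∑ v ∈ Ico (l - t) l, ((l - t - (v + 1) : ℕ) : ℝ) = 0 := by
      apply Finset.sum_eq_zero
      intro v hv
      simp only [mem_Ico] at hv
      have : l - t - (v + 1) = 0 := by omega
      rw [this]; norm_num
    rw [e5, add_zero]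
    apply Finset.sum_congr rfl
    intro v hv
    simp only [mem_Ico] at hv
    have h6 : l - t - (v + 1) = (l - t - 1) - v := by omega
    have h7 : v ≤ l - t - 1 := by omega
    rw [h6, Nat.cast_sub h7]
  rw [E1, E2, E3]
  -- evaluate the three Ico sums
  have F1 : ∑ v ∈ Ico k l, ((n : ℝ) - v)
      = ((l - k : ℕ) : ℝ) * ((n : ℝ) - k)
        - ((l - k : ℕ) : ℝ) * (((l - k : ℕ) : ℝ) - 1) / 2 := sumIcoR k l (n : ℝ)
  have F2 : ∑ v ∈ Ico (l - t) l, ((m : ℝ) - n + l - 1 - v)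
      = ((t : ℕ) : ℝ) * (((m : ℝ) - n + l - 1) - (l - t : ℕ))
        - ((t : ℕ) : ℝ) * (((t : ℕ) : ℝ) - 1) / 2 := by
    have := sumIcoR (l - t) l ((m : ℝ) - n + l - 1)
    rw [show l - (l - t) = t from by omega] at this
    exact this
  have F3 : ∑ v ∈ Ico k (l - t), (((l - t - 1 : ℕ) : ℝ) - v)
      = ((l - t - k : ℕ) : ℝ) * (((l - t - 1 : ℕ) : ℝ) - k)
        - ((l - t - k : ℕ) : ℝ) * (((l - t - k : ℕ) : ℝ) - 1) / 2 :=
    sumIcoR k (l - t) ((l - t - 1 : ℕ) : ℝ)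
  rw [F1, F2, F3]
  -- cast facts
  have c1 : ((l - k : ℕ) : ℝ) = (l : ℝ) - k := by push_cast [Nat.cast_sub hk]; ring
  have c2 : ((n - k : ℕ) : ℝ) = (n : ℝ) - k := by push_cast [Nat.cast_sub (hk.trans hln)]; ring
  have c3 : ((l - t : ℕ) : ℝ) = (l : ℝ) - t := by push_cast [Nat.cast_sub (by omega : t ≤ l)]; ring
  have c4 : ((l - t - 1 : ℕ) : ℝ) = (l : ℝ) - t - 1 := by
    rw [Nat.cast_sub hlt1, c3]; push_cast; ring
  have c5 : ((l - t - k : ℕ) : ℝ) = (l : ℝ) - t - k := by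
    rw [show l - t - k = (l - t) - k from rfl, Nat.cast_sub hkc, c3]
  have c6 : ((t * (X - t) : ℕ) : ℝ) = (t : ℝ) * ((X : ℝ) - t) := by
    push_cast [Nat.cast_sub htX]; ring
  have c7 : ((D : ℕ) : ℝ) = (m : ℝ) - n := by rw [hD, Nat.cast_sub hnm]
  rw [c1, c2, c3, c4, c5, c6]
  rcases le_or_gt D (l - k) with hc | hc
  · have c8 : ((X : ℕ) : ℝ) = (l : ℝ) - k - D := by
      have h0 : X + D + k = l := by omega
      have h1 := congrArg (fun z : ℕ => (z : ℝ)) h0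
      push_cast at h1
      linarith
    rw [← c7, c8]
    ring
  · have hX0 : X = 0 := by omega
    have ht0 : t = 0 := by rw [ht, hX0]
    rw [hX0, ht0]
    push_cast
    ring

/-- **Optimization problem of Section III-A** (case `min{m,n} ≥ l`): the infimum of
`ε(α,β) = ∑_{i=1}^l (n−i+1)α_i + ∑_{i=1}^l (m−n+l−i)β_i + ∑_{i<j} (α_i−β_j)⁺`
over the outage region at integer multiplexing gain `k` equals
`(l−k)(n−k) − ⌊((l−(m−n)−k)⁺)²/4⌋`.  (Indices are 0-based, so the 1-based
coefficient `n−i+1` becomes `n−i`, and `m−n+l−i` becomes `m−n+l−1−i`.) -/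
theorem outage_exponent_inf {m n l : ℕ} (hl : 0 < l) (hln : l ≤ n) (hnm : n ≤ m)
    {k : ℕ} (hk : k ≤ l) :
    sInf ((fun p : (Fin l → ℝ) × (Fin l → ℝ) =>
        ∑ i : Fin l, ((n : ℝ) - (i : ℕ)) * p.1 i +
        ∑ i : Fin l, ((m : ℝ) - n + l - 1 - (i : ℕ)) * p.2 i +
        ∑ i : Fin l, ∑ j ∈ Finset.Ioi i, max (p.1 i - p.2 j) 0) ''
      {p : (Fin l → ℝ) × (Fin l → ℝ) |
        0 ≤ p.2 ⟨0, hl⟩ ∧ Monotone p.2 ∧ Monotone p.1 ∧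
        (∀ i, p.2 i ≤ p.1 i) ∧ ∑ i : Fin l, max (1 - p.1 i) 0 ≤ (k : ℝ)}) =
    ((l : ℝ) - k) * ((n : ℝ) - k) -
      (⌊(max ((l : ℝ) - ((m : ℝ) - n) - k) 0) ^ 2 / 4⌋ : ℝ) := by
  have hval0 : ((l - k : ℕ) : ℝ) * ((n - k : ℕ) : ℝ)
      - (((l - k - (m - n)) / 2 * ((l - k - (m - n)) - (l - k - (m - n)) / 2) : ℕ) : ℝ)
      = ((l : ℝ) - k) * ((n : ℝ) - k) -
        (⌊(max ((l : ℝ) - ((m : ℝ) - n) - k) 0) ^ 2 / 4⌋ : ℝ) :=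
    rhs_eq m n l k hln hnm hk
  have hmaster : ∑ v ∈ Finset.Ico k l, (cN n l (m - n) v : ℝ)
      = ((l - k : ℕ) : ℝ) * ((n - k : ℕ) : ℝ)
        - (((l - k - (m - n)) / 2 * ((l - k - (m - n)) - (l - k - (m - n)) / 2) : ℕ) : ℝ) :=
    master n l (m - n) k hk hln
  -- the witness
  obtain ⟨hw1, hw2, hw3, hw4, hw5⟩ := witness_mem m n l k hl hln hnm hk
  have hwmem : (wA k (l := l), wA (l - (l - k - (m - n)) / 2) (l := l)) ∈
      {p : (Fin l → ℝ) × (Fin l → ℝ) |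
        0 ≤ p.2 ⟨0, hl⟩ ∧ Monotone p.2 ∧ Monotone p.1 ∧
        (∀ i, p.2 i ≤ p.1 i) ∧ ∑ i : Fin l, max (1 - p.1 i) 0 ≤ (k : ℝ)} :=
    ⟨hw1, hw2, hw3, hw4, hw5⟩
  have hwval := witness_value m n l k hl hln hnm hk
  -- lower bound for every point of the image
  have hlb : ∀ x ∈ ((fun p : (Fin l → ℝ) × (Fin l → ℝ) =>
        ∑ i : Fin l, ((n : ℝ) - (i : ℕ)) * p.1 i +
        ∑ i : Fin l, ((m : ℝ) - n + l - 1 - (i : ℕ)) * p.2 i +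
        ∑ i : Fin l, ∑ j ∈ Finset.Ioi i, max (p.1 i - p.2 j) 0) ''
      {p : (Fin l → ℝ) × (Fin l → ℝ) |
        0 ≤ p.2 ⟨0, hl⟩ ∧ Monotone p.2 ∧ Monotone p.1 ∧
        (∀ i, p.2 i ≤ p.1 i) ∧ ∑ i : Fin l, max (1 - p.1 i) 0 ≤ (k : ℝ)}),
      ((l : ℝ) - k) * ((n : ℝ) - k) -
        (⌊(max ((l : ℝ) - ((m : ℝ) - n) - k) 0) ^ 2 / 4⌋ : ℝ) ≤ x := by
    rintro x ⟨p, ⟨hp1, hp2, hp3, hp4, hp5⟩, rfl⟩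
    rw [← hval0, ← hmaster]
    show ∑ v ∈ Finset.Ico k l, (cN n l (m - n) v : ℝ) ≤
      ∑ i : Fin l, ((n : ℝ) - (i : ℕ)) * p.1 i +
      ∑ i : Fin l, ((m : ℝ) - n + l - 1 - (i : ℕ)) * p.2 i +
      ∑ i : Fin l, ∑ j ∈ Finset.Ioi i, max (p.1 i - p.2 j) 0
    set AP : ℕ → ℝ := fun v => if h : v < l then p.1 ⟨v, h⟩ else 0 with hAP
    set BP : ℕ → ℝ := fun v => if h : v < l then p.2 ⟨v, h⟩ else 0 with hBP
    set A : ℕ → ℝ := fun v => min (AP v) 1 with hA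
    have hAPi : ∀ i : Fin l, AP (i : ℕ) = p.1 i := by
      intro i; rw [hAP]; simp only [Fin.is_lt, dif_pos, Fin.eta]
    have hBPi : ∀ i : Fin l, BP (i : ℕ) = p.2 i := by
      intro i; rw [hBP]; simp only [Fin.is_lt, dif_pos, Fin.eta]
    have hB0 : ∀ w, 0 ≤ BP w := by
      intro w
      rw [hBP]
      by_cases h : w < l
      · simp only [dif_pos h]
        exact hp1.trans (hp2 (by exact Fin.mk_le_mk.mpr (Nat.zero_le w)))
      · simp only [dif_neg h]; exact le_refl 0
    have hAP0 : ∀ v, 0 ≤ AP v := by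
      intro v
      rw [hAP]
      by_cases h : v < l
      · simp only [dif_pos h]
        exact (hB0 v).trans (by rw [hBP]; simp only [dif_pos h]; exact hp4 _)
      · simp only [dif_neg h]; exact le_refl 0
    have hA0 : ∀ v, 0 ≤ A v := fun v => le_min (hAP0 v) zero_le_one
    have hA1 : ∀ v, A v ≤ 1 := fun v => min_le_right _ _
    have hAle : ∀ v, A v ≤ AP v := fun v => min_le_left _ _
    -- sum constraint
    have hSA : (l : ℝ) - k ≤ ∑ v ∈ range l, A v := by
      have e1 : ∑ i : Fin l, max (1 - p.1 i) 0 = ∑ v ∈ range l, (1 - A v) := by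
        rw [← Fin.sum_univ_eq_sum_range (fun v => 1 - A v) l]
        apply Finset.sum_congr rfl
        intro i _
        have hAi : A (i : ℕ) = min (AP (i : ℕ)) 1 := by rw [hA]
        rw [hAi, ← hAPi i]
        rcases le_total (AP (i : ℕ)) 1 with h | h
        · rw [min_eq_left h, max_eq_left (by linarith)]
        · rw [min_eq_right h, max_eq_right (by linarith)]; ring
      rw [e1] at hp5
      rw [Finset.sum_sub_distrib, Finset.sum_const, card_range, nsmul_eq_mul, mul_one] at hp5
      linarith
    have core := lower_core n l (m - n) k hl hln hk A BP hA0 hA1 hB0 hSA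
    -- compare core RHS with the actual value
    have c1 : ∑ i : Fin l, ((n : ℝ) - (i : ℕ)) * p.1 i
        = ∑ v ∈ range l, ((n : ℝ) - v) * AP v := by
      rw [← Fin.sum_univ_eq_sum_range (fun v => ((n : ℝ) - v) * AP v) l]
      exact Finset.sum_congr rfl fun i _ => by rw [hAPi i]
    have c2 : ∑ i : Fin l, ((m : ℝ) - n + l - 1 - (i : ℕ)) * p.2 i
        = ∑ w ∈ range l, ((m - n + l - 1 - w : ℕ) : ℝ) * BP w := by
      rw [← Fin.sum_univ_eq_sum_range (fun w => ((m - n + l - 1 - w : ℕ) : ℝ) * BP w) l]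
      apply Finset.sum_congr rfl
      intro i _
      rw [hBPi i]
      congr 1
      have h0 : ((m - n) + l - 1 - (i : ℕ)) + (i : ℕ) + 1 = (m - n) + l := by
        have := i.isLt; omega
      have h1 := congrArg (fun z : ℕ => (z : ℝ)) h0
      push_cast [Nat.cast_sub hnm] at h1
      linarith
    have c3 : ∑ i : Fin l, ∑ j ∈ Finset.Ioi i, max (p.1 i - p.2 j) 0
        = ∑ v ∈ range l, ∑ w ∈ Ico (v + 1) l, max (AP v - BP w) 0 := by
      rw [← Fin.sum_univ_eq_sum_range
        (fun v => ∑ w ∈ Ico (v + 1) l, max (AP v - BP w) 0) l]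
      apply Finset.sum_congr rfl
      intro i _
      rw [← sum_Ioi_to_Ico i (fun w => max (AP (i : ℕ) - BP w) 0)]
      apply Finset.sum_congr rfl
      intro j _
      rw [hAPi i, hBPi j]
    have b1 : ∑ v ∈ range l, ((n : ℝ) - v) * A v
        ≤ ∑ v ∈ range l, ((n : ℝ) - v) * AP v := by
      apply Finset.sum_le_sum
      intro v hv
      simp only [mem_range] at hv
      have hcoef : (0 : ℝ) ≤ (n : ℝ) - v := by
        have : (v : ℝ) ≤ (n : ℝ) := by exact_mod_cast (by omega : v ≤ n)
        linarith
      exact mul_le_mul_of_nonneg_left (hAle v) hcoef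
    have b3 : ∑ v ∈ range l, ∑ w ∈ Ico (v + 1) l, max (A v - BP w) 0
        ≤ ∑ v ∈ range l, ∑ w ∈ Ico (v + 1) l, max (AP v - BP w) 0 := by
      apply Finset.sum_le_sum
      intro v _
      apply Finset.sum_le_sum
      intro w _
      exact max_le_max (by linarith [hAle v]) (le_refl 0)
    rw [c1, c2, c3]
    calc ∑ v ∈ Finset.Ico k l, (cN n l (m - n) v : ℝ)
        ≤ ∑ v ∈ range l, ((n : ℝ) - v) * A v
          + ∑ w ∈ range l, ((m - n + l - 1 - w : ℕ) : ℝ) * BP w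
          + ∑ v ∈ range l, ∑ w ∈ Ico (v + 1) l, max (A v - BP w) 0 := core
      _ ≤ ∑ v ∈ range l, ((n : ℝ) - v) * AP v
          + ∑ w ∈ range l, ((m - n + l - 1 - w : ℕ) : ℝ) * BP w
          + ∑ v ∈ range l, ∑ w ∈ Ico (v + 1) l, max (AP v - BP w) 0 := by
          linarith [b1, b3]
  apply le_antisymm
  · apply csInf_le ⟨_, hlb⟩
    exact ⟨(wA k, wA (l - (l - k - (m - n)) / 2)), hwmem, by
      rw [← hval0]
      exact hwval⟩
  · exact le_csInf ⟨_, Set.mem_image_of_mem _ hwmem⟩ hlb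
end

section
/- Let m ≥ n ≥ l ≥ 1 be integers and fix reals 0 ≤ α₁ ≤ α₂ ≤ ⋯ ≤ α_l. Then the infimum over vectors β ∈ ℝ^l with 0 ≤ β₁ ≤ ⋯ ≤ β_l and β_i ≤ α_i for all i of the quantity ∑_{i=1}^{l} (n−i+1)·α_i + ∑_{i=1}^{l} (m−n+l−i)·β_i + ∑_{1≤i<j≤l} max(α_i−β_j, 0) equals ∑_{i=1}^{l−(m−n)} ( n+1−2i+⌊(l+i+(m−n))/2⌋ )·α_i + ∑_{i=max(l−(m−n),0)+1}^{l} (n+l+1−2i)·α_i, where the first sum is empty if l ≤ m−n. -/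
open Finset

/-- The optimal `β`. -/
noncomputable def betaStar (l d : ℕ) (α : Fin l → ℝ) : Fin l → ℝ :=
  fun j => if h : l + d ≤ 2 * (j : ℕ) then
    α ⟨2 * (j : ℕ) - (l + d), by have := j.isLt; omega⟩ else 0

lemma aux_L1 (l d : ℕ) (α : Fin l → ℝ) (hα : Monotone α) (hα0 : ∀ i, 0 ≤ α i) (j : Fin l) :
    ((d : ℝ) + l - 1 - (j : ℕ)) * betaStar l d α j
      + ∑ i ∈ Iio j, max (α i - betaStar l d α j) 0
    = ∑ i ∈ (Iio j).filter (fun i : Fin l => 2 * (j : ℕ) < l + d + (i : ℕ)), α i := by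
  have hj := j.isLt
  by_cases h : l + d ≤ 2 * (j : ℕ)
  · set k : Fin l := ⟨2 * (j : ℕ) - (l + d), by omega⟩ with hk
    have hkv : (k : ℕ) = 2 * (j : ℕ) - (l + d) := rfl
    have hβ : betaStar l d α j = α k := dif_pos h
    rw [hβ]
    have hmax : ∀ i ∈ Iio j, max (α i - α k) 0
        = if 2 * (j : ℕ) < l + d + (i : ℕ) then α i - α k else 0 := by
      intro i _
      by_cases hik : 2 * (j : ℕ) < l + d + (i : ℕ)
      · rw [if_pos hik, max_eq_left]
        have hki : k ≤ i := by rw [Fin.le_def, hkv]; omega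
        have := hα hki
        linarith
      · rw [if_neg hik, max_eq_right]
        have hik2 : i ≤ k := by rw [Fin.le_def, hkv]; omega
        have := hα hik2
        linarith
    rw [Finset.sum_congr rfl hmax, ← Finset.sum_filter, Finset.sum_sub_distrib,
      Finset.sum_const]
    have hcard : ((Iio j).filter (fun i : Fin l => 2 * (j : ℕ) < l + d + (i : ℕ))).card
        = (j : ℕ) - (k : ℕ) - 1 := by
      have heq : (Iio j).filter (fun i : Fin l => 2 * (j : ℕ) < l + d + (i : ℕ)) = Ioo k j := by
        ext i
        simp only [Finset.mem_filter, Finset.mem_Iio, Finset.mem_Ioo, Fin.lt_def, hkv]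
        omega
      rw [heq, Fin.card_Ioo]
    rw [hcard]
    have hc : (((j : ℕ) - (k : ℕ) - 1 : ℕ) : ℝ) = (d : ℝ) + l - 1 - (j : ℕ) := by
      have h1 : (j : ℕ) - (k : ℕ) - 1 + (j : ℕ) + 1 = d + l := by rw [hkv]; omega
      have h2 := congrArg (fun x : ℕ => (x : ℝ)) h1
      push_cast at h2
      linarith
    rw [nsmul_eq_mul, hc]
    ring
  · have hβ : betaStar l d α j = 0 := dif_neg h
    rw [hβ]
    have hfil : (Iio j).filter (fun i : Fin l => 2 * (j : ℕ) < l + d + (i : ℕ)) = Iio j := by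
      apply Finset.filter_true_of_mem
      intro i _
      omega
    rw [hfil, mul_zero, zero_add]
    apply Finset.sum_congr rfl
    intro i _
    rw [sub_zero, max_eq_left (hα0 i)]

lemma aux_L2 (l d : ℕ) (α : Fin l → ℝ) (hα : Monotone α) (hα0 : ∀ i, 0 ≤ α i) (j : Fin l)
    (t : ℝ) (ht : 0 ≤ t) :
    ∑ i ∈ (Iio j).filter (fun i : Fin l => 2 * (j : ℕ) < l + d + (i : ℕ)), α i
      ≤ ((d : ℝ) + l - 1 - (j : ℕ)) * t + ∑ i ∈ Iio j, max (α i - t) 0 := by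
  have hj := j.isLt
  set T := (Iio j).filter (fun i : Fin l => 2 * (j : ℕ) < l + d + (i : ℕ)) with hT
  have hsub : T ⊆ Iio j := Finset.filter_subset _ _
  have hstep : ∑ i ∈ T, α i ≤ (T.card : ℝ) * t + ∑ i ∈ T, max (α i - t) 0 := by
    have hle : ∀ i ∈ T, α i ≤ max (α i - t) 0 + t := by
      intro i _
      have := le_max_left (α i - t) 0
      linarith
    calc ∑ i ∈ T, α i ≤ ∑ i ∈ T, (max (α i - t) 0 + t) := Finset.sum_le_sum hle
      _ = ∑ i ∈ T, max (α i - t) 0 + T.card • t := by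
          rw [Finset.sum_add_distrib, Finset.sum_const]
      _ = (T.card : ℝ) * t + ∑ i ∈ T, max (α i - t) 0 := by rw [nsmul_eq_mul]; ring
  have hmono : ∑ i ∈ T, max (α i - t) 0 ≤ ∑ i ∈ Iio j, max (α i - t) 0 :=
    Finset.sum_le_sum_of_subset_of_nonneg hsub (fun i _ _ => le_max_right _ _)
  have hcard : (T.card : ℝ) * t ≤ ((d : ℝ) + l - 1 - (j : ℕ)) * t := by
    apply mul_le_mul_of_nonneg_right _ ht
    by_cases h : l + d ≤ 2 * (j : ℕ)
    · have heq : T = Ioo (⟨2 * (j : ℕ) - (l + d), by omega⟩ : Fin l) j := by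
        ext i
        simp only [hT, Finset.mem_filter, Finset.mem_Iio, Finset.mem_Ioo, Fin.lt_def]
        omega
      rw [heq, Fin.card_Ioo]
      have h1 : (j : ℕ) - (2 * (j : ℕ) - (l + d)) - 1 + (j : ℕ) + 1 = d + l := by omega
      have h2 := congrArg (fun x : ℕ => (x : ℝ)) h1
      push_cast at h2
      simp only [Fin.val_mk]
      linarith
    · have hTc : T.card ≤ (Iio j).card := Finset.card_le_card hsub
      rw [Fin.card_Iio] at hTc
      have h2 : (T.card : ℝ) ≤ ((j : ℕ) : ℝ) := by exact_mod_cast hTc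
      have h1 : 2 * (j : ℕ) + 1 ≤ l + d := by omega
      have h3 := congrArg (fun x : ℕ => (x : ℝ)) (Nat.le.dest h1).choose_spec
      push_cast at h3
      linarith
  linarith

lemma aux_card (l d : ℕ) (hl : 0 < l) (i : Fin l) :
    ((Ioi i).filter (fun j : Fin l => 2 * (j : ℕ) < l + d + (i : ℕ))).card
      = min ((l + d + (i : ℕ) - 1) / 2) (l - 1) - (i : ℕ) := by
  have heq : (Ioi i).filter (fun j : Fin l => 2 * (j : ℕ) < l + d + (i : ℕ))
      = Ioc i ⟨min ((l + d + (i : ℕ) - 1) / 2) (l - 1), by omega⟩ := by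
    ext j
    have := j.isLt
    simp only [Finset.mem_filter, Finset.mem_Ioi, Finset.mem_Ioc, Fin.lt_def, Fin.le_def]
    omega
  rw [heq, Fin.card_Ioc]

/-- **Inner minimization over β of Section III-A** (leading to equation (eq:epsilon:a)):
for fixed ordered `0 ≤ α₁ ≤ ⋯ ≤ α_l`, the infimum over feasible `β` of
`∑_{i=1}^l (n−i+1)α_i + ∑_{i=1}^l (m−n+l−i)β_i + ∑_{i<j} (α_i−β_j)⁺` equals
`∑_{i=1}^{l−(m−n)} (n+1−2i+⌊(l+i+(m−n))/2⌋)α_i + ∑_{i=max(l−(m−n),0)+1}^{l} (n+l+1−2i)α_i`,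
stated here as a single sum over `i = 1, …, l` (0-based index `i`, 1-based `i+1`). -/

theorem inner_beta_minimization {m n l : ℕ} (hl : 0 < l) (hln : l ≤ n) (hnm : n ≤ m)
    (α : Fin l → ℝ) (hα0 : 0 ≤ α ⟨0, hl⟩) (hα : Monotone α) :
    sInf ((fun β : Fin l → ℝ =>
        ∑ i : Fin l, ((n : ℝ) - (i : ℕ)) * α i +
        ∑ i : Fin l, ((m : ℝ) - n + l - 1 - (i : ℕ)) * β i +
        ∑ i : Fin l, ∑ j ∈ Finset.Ioi i, max (α i - β j) 0) ''
      {β : Fin l → ℝ | 0 ≤ β ⟨0, hl⟩ ∧ Monotone β ∧ ∀ i, β i ≤ α i}) =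
    ∑ i : Fin l,
      (if (i : ℕ) < l - (m - n) then
        (n : ℝ) + 1 - 2 * ((i : ℕ) + 1) +
          (⌊((l : ℝ) + ((i : ℕ) + 1) + ((m : ℝ) - n)) / 2⌋ : ℝ)
      else (n : ℝ) + l + 1 - 2 * ((i : ℕ) + 1)) * α i := by
  have hα0' : ∀ i, 0 ≤ α i :=
    fun i => hα0.trans (hα (by rw [Fin.le_def]; exact Nat.zero_le _))
  set d := m - n with hd
  have hdc : (d : ℝ) = (m : ℝ) - n := by rw [hd, Nat.cast_sub hnm]
  set F : (Fin l → ℝ) → ℝ := fun β : Fin l → ℝ =>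
      ∑ i : Fin l, ((n : ℝ) - (i : ℕ)) * α i +
      ∑ i : Fin l, ((m : ℝ) - n + l - 1 - (i : ℕ)) * β i +
      ∑ i : Fin l, ∑ j ∈ Finset.Ioi i, max (α i - β j) 0 with hF
  have hobj : ∀ β : Fin l → ℝ, F β
      = ∑ i : Fin l, ((n : ℝ) - (i : ℕ)) * α i +
        ∑ j : Fin l, (((d : ℝ) + l - 1 - (j : ℕ)) * β j
          + ∑ i ∈ Iio j, max (α i - β j) 0) := by
    intro β
    rw [hF]
    simp only [← hdc]
    have hswap : ∑ i : Fin l, ∑ j ∈ Finset.Ioi i, max (α i - β j) 0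
        = ∑ j : Fin l, ∑ i ∈ Iio j, max (α i - β j) 0 :=
      Finset.sum_comm' (by
        intro x y
        simp only [Finset.mem_univ, Finset.mem_Ioi, Finset.mem_Iio, true_and, and_true])
    rw [hswap, add_assoc, ← Finset.sum_add_distrib]
  -- feasibility of betaStar
  have hfeas : betaStar l d α ∈ {β : Fin l → ℝ | 0 ≤ β ⟨0, hl⟩ ∧ Monotone β ∧ ∀ i, β i ≤ α i} := by
    refine ⟨?_, ?_, ?_⟩
    · have : betaStar l d α ⟨0, hl⟩ = 0 := dif_neg (by simp; omega)
      rw [this]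
    · intro j j' hjj'
      rw [Fin.le_def] at hjj'
      unfold betaStar
      by_cases h1 : l + d ≤ 2 * (j : ℕ)
      · have h2 : l + d ≤ 2 * (j' : ℕ) := by omega
        rw [dif_pos h1, dif_pos h2]
        exact hα (by rw [Fin.le_def]; simp; omega)
      · rw [dif_neg h1]
        by_cases h2 : l + d ≤ 2 * (j' : ℕ)
        · rw [dif_pos h2]; exact hα0' _
        · rw [dif_neg h2]
    · intro j
      unfold betaStar
      by_cases h1 : l + d ≤ 2 * (j : ℕ)
      · rw [dif_pos h1]
        exact hα (by rw [Fin.le_def]; simp; have := j.isLt; omega)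
      · rw [dif_neg h1]; exact hα0' _
  -- lower bound
  have hlow : ∀ β ∈ {β : Fin l → ℝ | 0 ≤ β ⟨0, hl⟩ ∧ Monotone β ∧ ∀ i, β i ≤ α i},
      F (betaStar l d α) ≤ F β := by
    rintro β ⟨hβ0, hβm, hβα⟩
    rw [hobj, hobj]
    apply add_le_add_right
    apply Finset.sum_le_sum
    intro j _
    have htj : 0 ≤ β j := hβ0.trans (hβm (by rw [Fin.le_def]; exact Nat.zero_le _))
    calc ((d : ℝ) + l - 1 - (j : ℕ)) * betaStar l d α j
          + ∑ i ∈ Iio j, max (α i - betaStar l d α j) 0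
        = ∑ i ∈ (Iio j).filter (fun i : Fin l => 2 * (j : ℕ) < l + d + (i : ℕ)), α i :=
          aux_L1 l d α hα hα0' j
      _ ≤ ((d : ℝ) + l - 1 - (j : ℕ)) * β j + ∑ i ∈ Iio j, max (α i - β j) 0 :=
          aux_L2 l d α hα hα0' j (β j) htj
  -- value of the minimizer
  have hval : F (betaStar l d α)
      = ∑ i : Fin l,
        (if (i : ℕ) < l - d then
          (n : ℝ) + 1 - 2 * ((i : ℕ) + 1) +
            (⌊((l : ℝ) + ((i : ℕ) + 1) + ((m : ℝ) - n)) / 2⌋ : ℝ)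
        else (n : ℝ) + l + 1 - 2 * ((i : ℕ) + 1)) * α i := by
    rw [hobj]
    have h1 : ∑ j : Fin l, (((d : ℝ) + l - 1 - (j : ℕ)) * betaStar l d α j
          + ∑ i ∈ Iio j, max (α i - betaStar l d α j) 0)
        = ∑ j : Fin l, ∑ i ∈ (Iio j).filter
            (fun i : Fin l => 2 * (j : ℕ) < l + d + (i : ℕ)), α i :=
      Finset.sum_congr rfl (fun j _ => aux_L1 l d α hα hα0' j)
    rw [h1]
    have h2 : ∑ j : Fin l, ∑ i ∈ (Iio j).filter
            (fun i : Fin l => 2 * (j : ℕ) < l + d + (i : ℕ)), α i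
        = ∑ i : Fin l, ∑ j ∈ (Ioi i).filter
            (fun j : Fin l => 2 * (j : ℕ) < l + d + (i : ℕ)), α i :=
      Finset.sum_comm' (by
        intro x y
        simp only [Finset.mem_univ, Finset.mem_filter, Finset.mem_Iio, Finset.mem_Ioi,
          true_and, and_true])
    rw [h2, ← Finset.sum_add_distrib]
    apply Finset.sum_congr rfl
    intro i _
    rw [Finset.sum_const, aux_card l d hl i, nsmul_eq_mul, ← add_mul]
    congr 1
    have hil := i.isLt
    by_cases hi : (i : ℕ) < l - d
    · rw [if_pos hi]
      -- compute the floor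
      set q : ℕ := (l + (i : ℕ) + 1 + d) / 2 with hq
      have hfl : (⌊((l : ℝ) + ((i : ℕ) + 1) + ((m : ℝ) - n)) / 2⌋ : ℝ) = (q : ℝ) := by
        have hfl' : ⌊((l : ℝ) + ((i : ℕ) + 1) + ((m : ℝ) - n)) / 2⌋ = (q : ℤ) := by
          have h2q1 : 2 * q ≤ l + (i : ℕ) + 1 + d := by omega
          have h2q2 : l + (i : ℕ) + 1 + d < 2 * q + 2 := by omega
          have c1 : 2 * (q : ℝ) ≤ (l : ℝ) + (i : ℕ) + 1 + d := by exact_mod_cast h2q1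
          have c2 : (l : ℝ) + (i : ℕ) + 1 + d < 2 * (q : ℝ) + 2 := by exact_mod_cast h2q2
          rw [Int.floor_eq_iff]
          constructor
          · rw [le_div_iff₀ (by norm_num : (0:ℝ) < 2)]
            push_cast
            rw [← hdc]
            linarith
          · rw [div_lt_iff₀ (by norm_num : (0:ℝ) < 2)]
            push_cast
            rw [← hdc]
            linarith
        rw [hfl']
        push_cast
        ring
      rw [hfl]
      have hmin : min ((l + d + (i : ℕ) - 1) / 2) (l - 1) = (l + d + (i : ℕ) - 1) / 2 := by
        omega
      rw [hmin]
      have hkey : (l + d + (i : ℕ) - 1) / 2 - (i : ℕ) + (i : ℕ) + 1 = q := by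
        rw [hq]; omega
      have := congrArg (fun x : ℕ => (x : ℝ)) hkey
      push_cast at this
      linarith
    · rw [if_neg hi]
      have hmin : min ((l + d + (i : ℕ) - 1) / 2) (l - 1) = l - 1 := by omega
      rw [hmin]
      have hkey : l - 1 - (i : ℕ) + (i : ℕ) + 1 = l := by omega
      have := congrArg (fun x : ℕ => (x : ℝ)) hkey
      push_cast at this
      linarith
  -- combine
  have himg : F (betaStar l d α) ∈ F ''
      {β : Fin l → ℝ | 0 ≤ β ⟨0, hl⟩ ∧ Monotone β ∧ ∀ i, β i ≤ α i} :=
    Set.mem_image_of_mem _ hfeas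
  have hbdd : BddBelow (F ''
      {β : Fin l → ℝ | 0 ≤ β ⟨0, hl⟩ ∧ Monotone β ∧ ∀ i, β i ≤ α i}) := by
    refine ⟨F (betaStar l d α), ?_⟩
    rintro x ⟨β, hβ, rfl⟩
    exact hlow β hβ
  refine le_antisymm (le_of_le_of_eq (csInf_le hbdd himg) hval)
    (le_csInf ⟨_, himg⟩ ?_)
  rintro x ⟨β, hβ, rfl⟩
  exact le_of_eq_of_le hval.symm (hlow β hβ)
end

section
/- Let n < l ≤ m be positive integers and let k be an integer with 0 ≤ k ≤ n. Consider the function ε(α,β) := ∑_{i=1}^{n} (n+1−i)·α_i + ∑_{i=1}^{n+1} (l+m−n−i)·β_i + ∑_{i=n+2}^{l} (l+m+1−2i)·β_i + ∑_{i=1}^{n} ∑_{j=n+1}^{l} max(α_i−β_j, 0) + ∑_{1≤i<j≤n} max(α_i−β_j, 0) on pairs (α,β) with α ∈ ℝ^n, β ∈ ℝ^l. Then the infimum of ε(α,β) over the set { (α,β) : 0 ≤ β₁ ≤ ⋯ ≤ β_l, α₁ ≤ ⋯ ≤ α_n, β_i ≤ α_i for i = 1,…,n, and ∑_{i=1}^{n}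 max(1−α_i, 0) ≤ k } equals (l−k)(n−k) − ⌊(max(n−(m−l)−k, 0))² / 4⌋. -/
open Finset

private lemma card_filter_fin' (L lo hi : ℕ) (p : Fin L → Prop) [DecidablePred p]
    (hp : ∀ j : Fin L, p j ↔ (lo ≤ (j:ℕ) ∧ (j:ℕ) < hi)) :
    (Finset.univ.filter p).card = min hi L - lo := by
  classical
  have h1 : (Finset.univ.filter p).card
      = ∑ j : Fin L, (if lo ≤ (j:ℕ) ∧ (j:ℕ) < hi then 1 else 0) := by
    rw [Finset.card_filter]
    exact Finset.sum_congr rfl fun j _ => by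
      by_cases h : p j
      · rw [if_pos h, if_pos ((hp j).1 h)]
      · rw [if_neg h, if_neg (fun hc => h ((hp j).2 hc))]
  rw [h1, Fin.sum_univ_eq_sum_range (fun x => if lo ≤ x ∧ x < hi then 1 else 0) L,
    ← Finset.card_filter]
  have h2 : (Finset.range L).filter (fun x => lo ≤ x ∧ x < hi) = Finset.Ico lo (min hi L) := by
    ext x
    simp only [Finset.mem_filter, Finset.mem_range, Finset.mem_Ico]
    omega
  rw [h2, Nat.card_Ico]

private lemma sum_ite_sub {ι κ : Type*} [Fintype ι] [Fintype κ]
    (C : ι → κ → Prop) [∀ i j, Decidable (C i j)] (f : ι → ℝ) (g : κ → ℝ) :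
    ∑ i : ι, ∑ j : κ, (if C i j then f i - g j else 0)
    = ∑ i : ι, ((Finset.univ.filter (fun j => C i j)).card : ℝ) * f i
      - ∑ j : κ, ((Finset.univ.filter (fun i => C i j)).card : ℝ) * g j := by
  classical
  have h1 : ∀ i : ι, ∑ j : κ, (if C i j then f i - g j else 0)
      = ((Finset.univ.filter (fun j => C i j)).card : ℝ) * f i
        - ∑ j : κ, (if C i j then g j else 0) := by
    intro i
    rw [← Finset.sum_filter, Finset.sum_sub_distrib, Finset.sum_const, nsmul_eq_mul,
      Finset.sum_filter]
  rw [Finset.sum_congr rfl fun i _ => h1 i, Finset.sum_sub_distrib]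
  congr 1
  rw [Finset.sum_comm]
  exact Finset.sum_congr rfl fun j _ => by
    rw [← Finset.sum_filter, Finset.sum_const, nsmul_eq_mul]

private lemma reindex_fin {n l : ℕ} (hnl : n ≤ l) (g : Fin l → ℝ) (c : ℕ → ℕ)
    (hc : ∀ x : ℕ, n ≤ x → c x = 0) :
    ∑ j : Fin n, (c (j:ℕ) : ℝ) * g (Fin.castLE hnl j) = ∑ j : Fin l, (c (j:ℕ) : ℝ) * g j := by
  classical
  set G : ℕ → ℝ := fun x => (c x : ℝ) * (if h : x < l then g ⟨x, h⟩ else 0) with hG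
  have h1 : ∑ j : Fin n, (c (j:ℕ) : ℝ) * g (Fin.castLE hnl j) = ∑ x ∈ Finset.range n, G x := by
    rw [← Fin.sum_univ_eq_sum_range G n]
    refine Finset.sum_congr rfl fun j _ => ?_
    have hjl : (j:ℕ) < l := lt_of_lt_of_le j.isLt hnl
    simp only [hG, dif_pos hjl]
    rfl
  have h2 : ∑ j : Fin l, (c (j:ℕ) : ℝ) * g j = ∑ x ∈ Finset.range l, G x := by
    rw [← Fin.sum_univ_eq_sum_range G l]
    refine Finset.sum_congr rfl fun j _ => ?_
    simp only [hG, dif_pos j.isLt]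
  rw [h1, h2, ← Finset.sum_range_add_sum_Ico G hnl]
  have h3 : ∑ x ∈ Finset.Ico n l, G x = 0 :=
    Finset.sum_eq_zero fun x hx => by
      rw [Finset.mem_Ico] at hx
      simp [hG, hc x hx.1]
  rw [h3, add_zero]

private lemma sq_div_four (t : ℕ) : t^2/4 = (t/2) * ((t+1)/2) := by
  rcases Nat.even_or_odd t with ⟨a, rfl⟩ | ⟨a, rfl⟩
  · have e1 : (a+a)/2 = a := by omega
    have e2 : (a+a+1)/2 = a := by omega
    have e3 : (a+a)^2 = 4*(a*a) := by ring
    have e4 : 4*(a*a)/4 = a*a := by omega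
    rw [e1, e2, e3, e4]
  · have e1 : (2*a+1)/2 = a := by omega
    have e2 : (2*a+1+1)/2 = a+1 := by omega
    have e3 : (2*a+1)^2 = 4*(a*(a+1))+1 := by ring
    have e4 : (4*(a*(a+1))+1)/4 = a*(a+1) := by omega
    rw [e1, e2, e3, e4]

private lemma floor_nat_div4 (a : ℕ) : ⌊((a:ℝ))/4⌋ = (a/4 : ℕ) := by
  have h1 : (4*(a/4) : ℕ) ≤ a := Nat.mul_div_le a 4
  have h2 : a < 4*(a/4) + 4 := by omega
  have h1' : ((4*(a/4) : ℕ) : ℝ) ≤ (a : ℝ) := Nat.cast_le.2 h1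
  have h2' : (a : ℝ) < ((4*(a/4) + 4 : ℕ) : ℝ) := Nat.cast_lt.2 h2
  push_cast at h1' h2'
  have g1 : ((a/4 : ℕ) : ℝ) ≤ (a:ℝ)/4 := by
    rw [le_div_iff₀ (by norm_num : (0:ℝ) < 4)]; linarith
  have g2 : (a:ℝ)/4 < ((a/4 : ℕ) : ℝ) + 1 := by
    rw [div_lt_iff₀ (by norm_num : (0:ℝ) < 4)]; linarith
  rw [Int.floor_eq_iff]
  constructor
  · exact_mod_cast g1
  · exact_mod_cast g2

private def S0f (m n l : ℕ) : ℕ := l + m - n - 1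

private def aNf (m n l i : ℕ) : ℕ :=
  (n - i) + (min ((S0f m n l + i)/2 + 1) l - n) + (min ((S0f m n l + i)/2 + 1) n - (i+1))

private def N1c (m n l i : ℕ) : ℕ :=
  ((Finset.univ : Finset (Fin l)).filter fun j : Fin l => n ≤ (j:ℕ) ∧ 2*(j:ℕ) ≤ S0f m n l + i).card

private def N2c (m n l i : ℕ) : ℕ :=
  ((Finset.univ : Finset (Fin n)).filter fun j : Fin n => i < (j:ℕ) ∧ 2*(j:ℕ) ≤ S0f m n l + i).card

private def M1c (m n l j : ℕ) : ℕ :=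
  ((Finset.univ : Finset (Fin n)).filter fun i : Fin n => n ≤ j ∧ 2*j ≤ S0f m n l + (i:ℕ)).card

private def M2c (m n l j : ℕ) : ℕ :=
  if j < n then
    ((Finset.univ : Finset (Fin n)).filter fun i : Fin n => (i:ℕ) < j ∧ 2*j ≤ S0f m n l + (i:ℕ)).card
  else 0

private def cNf (m n l j : ℕ) : ℕ := if j ≤ n then l+m-n-1-j else l+m-1-2*j

private def aNc (m n l i : ℕ) : ℕ := (n - i) + N1c m n l i + N2c m n l i

private lemma N1c_eq (m n l i : ℕ) : N1c m n l i = min ((S0f m n l + i)/2 + 1) l - n := by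
  unfold N1c
  rw [card_filter_fin' l n ((S0f m n l + i)/2 + 1) _ (fun j => by omega)]

private lemma N2c_eq (m n l i : ℕ) : N2c m n l i = min ((S0f m n l + i)/2 + 1) n - (i+1) := by
  unfold N2c
  rw [card_filter_fin' n (i+1) ((S0f m n l + i)/2 + 1) _ (fun j => by omega)]

private lemma M1c_eq (m n l j : ℕ) :
    M1c m n l j = if n ≤ j then n - (2*j - S0f m n l) else 0 := by
  unfold M1c
  by_cases h : n ≤ j
  · rw [if_pos h, card_filter_fin' n (2*j - S0f m n l) n _ (fun i => by omega)]
    omega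
  · rw [if_neg h, card_filter_fin' n 1 0 _ (fun i => by omega)]
    omega

private lemma M2c_eq (m n l j : ℕ) :
    M2c m n l j = if j < n then min j n - (2*j - S0f m n l) else 0 := by
  unfold M2c
  by_cases h : j < n
  · rw [if_pos h, if_pos h, card_filter_fin' n (2*j - S0f m n l) j _ (fun i => by omega)]
  · rw [if_neg h, if_neg h]

private lemma aNc_eq (m n l i : ℕ) : aNc m n l i = aNf m n l i := by
  unfold aNc aNf
  rw [N1c_eq, N2c_eq]

private lemma aNf_mono {m n l : ℕ} (hnl : n < l) (hlm : l ≤ m) {i j : ℕ}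
    (hij : i ≤ j) : aNf m n l j ≤ aNf m n l i := by
  unfold aNf S0f
  omega

private lemma coef_le {m n l : ℕ} (hn : 0 < n) (hnl : n < l) (hlm : l ≤ m)
    {j : ℕ} (hj : j < l) : M1c m n l j + M2c m n l j ≤ cNf m n l j := by
  rw [M1c_eq, M2c_eq]
  unfold cNf S0f
  split_ifs <;> omega

private lemma coef_eq {m n l k : ℕ} (hn : 0 < n) (hnl : n < l) (hlm : l ≤ m) (hk : k ≤ n)
    {j : ℕ} (hj : j < l) (h2 : ¬ 2*j ≤ S0f m n l + k) :
    M1c m n l j + M2c m n l j = cNf m n l j := by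
  rw [M1c_eq, M2c_eq]
  unfold cNf S0f at *
  split_ifs <;> omega

private lemma qdiff (Q : ℕ) : ((Q^2/4 : ℕ) : ℤ) - (((Q-1)^2/4 : ℕ) : ℤ) = ((Q/2 : ℕ) : ℤ) := by
  rcases Q with _ | q
  · simp
  · rw [sq_div_four (q+1), show q + 1 - 1 = q from rfl, sq_div_four q]
    have e2 : (q+1+1)/2 = q/2 + 1 := by omega
    rw [e2]
    have e3 : (q+1)/2 * (q/2 + 1) = q/2 * ((q+1)/2) + (q+1)/2 := by ring
    omega

private lemma sum_aNf {m n l : ℕ} (hn : 0 < n) (hnl : n < l) (hlm : l ≤ m) :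
    ∀ d k, k + d = n →
    ∑ i ∈ Finset.Ico k n, ((aNf m n l i : ℤ)) =
      ((l:ℤ) - k) * ((n:ℤ) - k) - (((n + l - (m + k))^2 / 4 : ℕ) : ℤ) := by
  intro d
  induction d with
  | zero =>
    intro k hkn
    have hk : k = n := by omega
    rw [hk, Finset.Ico_self, Finset.sum_empty]
    have h0 : (n + l - (m + n))^2/4 = 0 := by
      have h1 : n + l - (m + n) = 0 := by omega
      rw [h1]
      simp
    rw [h0]
    push_cast
    ring
  | succ d ih =>
    intro k hkn
    have hkn' : k < n := by omega
    rw [Finset.sum_eq_sum_Ico_succ_bot hkn', ih (k+1) (by omega)]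
    have key : (aNf m n l k : ℤ) = (l:ℤ) + n - 2*k - 1 - (((n + l - (m + k))/2 : ℕ) : ℤ) := by
      unfold aNf S0f
      omega
    have hQ' : n + l - (m + (k+1)) = (n + l - (m + k)) - 1 := by omega
    rw [hQ', key]
    have hd := qdiff (n + l - (m + k))
    have expand : ((l:ℤ) - k) * ((n:ℤ) - k)
        = ((l:ℤ) - (k+1)) * ((n:ℤ) - (k+1)) + ((l:ℤ) + n - 2*k - 1) := by
      push_cast
      ring
    rw [expand]
    push_cast at hd ⊢
    linarith [hd]

private lemma weights_bound {n k : ℕ} (hk : k ≤ n) (a : Fin n → ℕ)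
    (hmono : ∀ i j : Fin n, (i:ℕ) ≤ (j:ℕ) → a j ≤ a i) (α : Fin n → ℝ)
    (hα : ∀ i, 0 ≤ α i) (hsum : ∑ i : Fin n, max (1 - α i) 0 ≤ (k:ℝ)) :
    ∑ i ∈ Finset.univ.filter (fun i : Fin n => k ≤ (i:ℕ)), (a i : ℝ)
      ≤ ∑ i : Fin n, (a i : ℝ) * α i := by
  classical
  set x : Fin n → ℝ := fun i => max (1 - α i) 0 with hx
  have hx0 : ∀ i, 0 ≤ x i := fun i => le_max_right _ _
  have hx1 : ∀ i, x i ≤ 1 := fun i => max_le (by linarith [hα i]) one_pos.le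
  have hxa : ∀ i, 1 - x i ≤ α i := fun i => by
    have h := le_max_left (1 - α i) 0
    simp only [hx]
    linarith
  have step1 : ∑ i : Fin n, (a i : ℝ) * (1 - x i) ≤ ∑ i : Fin n, (a i : ℝ) * α i :=
    Finset.sum_le_sum fun i _ => mul_le_mul_of_nonneg_left (hxa i) (Nat.cast_nonneg _)
  refine le_trans ?_ step1
  have split : ∑ i : Fin n, (a i:ℝ) * (1 - x i)
      = ∑ i : Fin n, (a i:ℝ) - ∑ i : Fin n, (a i:ℝ) * x i := by
    rw [← Finset.sum_sub_distrib]
    exact Finset.sum_congr rfl fun i _ => by ring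
  rw [split]
  have hfilters : ∑ i : Fin n, (a i : ℝ)
      = ∑ i ∈ Finset.univ.filter (fun i : Fin n => (i:ℕ) < k), (a i:ℝ)
        + ∑ i ∈ Finset.univ.filter (fun i : Fin n => k ≤ (i:ℕ)), (a i:ℝ) := by
    rw [← Finset.sum_filter_add_sum_filter_not Finset.univ (fun i : Fin n => (i:ℕ) < k)]
    congr 1
    exact Finset.sum_congr (Finset.filter_congr (by intro i _; simp [not_lt])) (fun _ _ => rfl)
  have key : ∑ i : Fin n, (a i:ℝ) * x i
      ≤ ∑ i ∈ Finset.univ.filter (fun i : Fin n => (i:ℕ) < k), (a i:ℝ) := by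
    by_cases hkn : k < n
    · set A : ℝ := (a ⟨k, hkn⟩ : ℝ) with hA
      have hA0 : 0 ≤ A := Nat.cast_nonneg _
      have haA : ∀ i : Fin n, k ≤ (i:ℕ) → (a i : ℝ) ≤ A :=
        fun i h => Nat.cast_le.2 (hmono ⟨k,hkn⟩ i h)
      have hAa : ∀ i : Fin n, (i:ℕ) < k → A ≤ (a i : ℝ) :=
        fun i h => Nat.cast_le.2 (hmono i ⟨k,hkn⟩ (le_of_lt h))
      have hxsplit : ∑ i : Fin n, x i
          = ∑ i ∈ Finset.univ.filter (fun i : Fin n => (i:ℕ) < k), x i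
            + ∑ i ∈ Finset.univ.filter (fun i : Fin n => ¬ (i:ℕ) < k), x i :=
        (Finset.sum_filter_add_sum_filter_not _ _ _).symm
      have hasplit : ∑ i : Fin n, (a i:ℝ) * x i
          = ∑ i ∈ Finset.univ.filter (fun i : Fin n => (i:ℕ) < k), (a i:ℝ) * x i
            + ∑ i ∈ Finset.univ.filter (fun i : Fin n => ¬ (i:ℕ) < k), (a i:ℝ) * x i :=
        (Finset.sum_filter_add_sum_filter_not _ _ _).symm
      have c1 : ∑ i ∈ Finset.univ.filter (fun i : Fin n => ¬ (i:ℕ) < k), (a i:ℝ) * x i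
          ≤ A * ((k:ℝ) - ∑ i ∈ Finset.univ.filter (fun i : Fin n => (i:ℕ) < k), x i) := by
        have s1 : ∑ i ∈ Finset.univ.filter (fun i : Fin n => ¬ (i:ℕ) < k), (a i:ℝ) * x i
            ≤ ∑ i ∈ Finset.univ.filter (fun i : Fin n => ¬ (i:ℕ) < k), A * x i := by
          refine Finset.sum_le_sum fun i hi => ?_
          rw [Finset.mem_filter] at hi
          exact mul_le_mul_of_nonneg_right (haA i (by omega)) (hx0 i)
        have s2 : ∑ i ∈ Finset.univ.filter (fun i : Fin n => ¬ (i:ℕ) < k), A * x i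
            = A * ∑ i ∈ Finset.univ.filter (fun i : Fin n => ¬ (i:ℕ) < k), x i := by
          rw [Finset.mul_sum]
        have s3 : ∑ i ∈ Finset.univ.filter (fun i : Fin n => ¬ (i:ℕ) < k), x i
            ≤ (k:ℝ) - ∑ i ∈ Finset.univ.filter (fun i : Fin n => (i:ℕ) < k), x i := by
          have := hsum
          rw [show ∑ i : Fin n, max (1 - α i) 0 = ∑ i : Fin n, x i from rfl, hxsplit] at this
          linarith
        calc ∑ i ∈ Finset.univ.filter (fun i : Fin n => ¬ (i:ℕ) < k), (a i:ℝ) * x i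
            ≤ A * ∑ i ∈ Finset.univ.filter (fun i : Fin n => ¬ (i:ℕ) < k), x i := by
              rw [← s2]; exact s1
          _ ≤ A * ((k:ℝ) - ∑ i ∈ Finset.univ.filter (fun i : Fin n => (i:ℕ) < k), x i) :=
              mul_le_mul_of_nonneg_left s3 hA0
      have c2 : ∑ i ∈ Finset.univ.filter (fun i : Fin n => (i:ℕ) < k), ((a i:ℝ) - A) * x i
          ≤ ∑ i ∈ Finset.univ.filter (fun i : Fin n => (i:ℕ) < k), ((a i:ℝ) - A) := by
        refine Finset.sum_le_sum fun i hi => ?_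
        rw [Finset.mem_filter] at hi
        exact mul_le_of_le_one_right (by linarith [hAa i hi.2]) (hx1 i)
      have hcard : (Finset.univ.filter (fun i : Fin n => (i:ℕ) < k)).card = k := by
        rw [card_filter_fin' n 0 k _ (fun i => by omega)]
        omega
      have c2' : ∑ i ∈ Finset.univ.filter (fun i : Fin n => (i:ℕ) < k), ((a i:ℝ) - A)
          = ∑ i ∈ Finset.univ.filter (fun i : Fin n => (i:ℕ) < k), (a i:ℝ) - (k:ℝ) * A := by
        rw [Finset.sum_sub_distrib, Finset.sum_const, hcard, nsmul_eq_mul]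
      have c2'' : ∑ i ∈ Finset.univ.filter (fun i : Fin n => (i:ℕ) < k), ((a i:ℝ) - A) * x i
          = ∑ i ∈ Finset.univ.filter (fun i : Fin n => (i:ℕ) < k), (a i:ℝ) * x i
            - A * ∑ i ∈ Finset.univ.filter (fun i : Fin n => (i:ℕ) < k), x i := by
        rw [Finset.mul_sum, ← Finset.sum_sub_distrib]
        exact Finset.sum_congr rfl fun i _ => by ring
      rw [hasplit]
      have := c2
      rw [c2'', c2'] at this
      linarith
    · have hkeq : ∀ i : Fin n, (i:ℕ) < k := fun i => lt_of_lt_of_le i.isLt (by omega)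
      have : Finset.univ.filter (fun i : Fin n => (i:ℕ) < k) = Finset.univ :=
        Finset.filter_true_of_mem fun i _ => hkeq i
      rw [this]
      refine Finset.sum_le_sum fun i _ => ?_
      calc (a i:ℝ) * x i ≤ (a i:ℝ) * 1 :=
            mul_le_mul_of_nonneg_left (hx1 i) (Nat.cast_nonneg _)
        _ = (a i:ℝ) := mul_one _
  linarith [hfilters, key]

private lemma mid_eq {m n l : ℕ} (hn : 0 < n) (hnl : n < l) (hlm : l ≤ m)
    (α : Fin n → ℝ) (β : Fin l → ℝ) :
    ∑ i : Fin n, ((n : ℝ) - (i : ℕ)) * α i +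
    ∑ j : Fin l, (if (j : ℕ) ≤ n then (l : ℝ) + m - n - 1 - (j : ℕ)
        else (l : ℝ) + m - 1 - 2 * (j : ℕ)) * β j +
    (∑ i : Fin n, ∑ j ∈ Finset.univ.filter (fun j : Fin l => n ≤ (j : ℕ)),
      (if 2*(j:ℕ) ≤ S0f m n l + (i:ℕ) then α i - β j else 0)) +
    (∑ i : Fin n, ∑ j ∈ Finset.Ioi i,
      (if 2*(j:ℕ) ≤ S0f m n l + (i:ℕ) then α i - β (Fin.castLE hnl.le j) else 0))
    = ∑ i : Fin n, (aNc m n l (i:ℕ) : ℝ) * α i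
      + ∑ j : Fin l, ((cNf m n l (j:ℕ) : ℝ) - (M1c m n l (j:ℕ) : ℝ)
          - (M2c m n l (j:ℕ) : ℝ)) * β j := by
  classical
  have h3 : (∑ i : Fin n, ∑ j ∈ Finset.univ.filter (fun j : Fin l => n ≤ (j : ℕ)),
      (if 2*(j:ℕ) ≤ S0f m n l + (i:ℕ) then α i - β j else 0))
      = ∑ i : Fin n, (N1c m n l (i:ℕ) : ℝ) * α i
        - ∑ j : Fin l, (M1c m n l (j:ℕ) : ℝ) * β j := by
    have e1 : ∀ i : Fin n, ∑ j ∈ Finset.univ.filter (fun j : Fin l => n ≤ (j : ℕ)),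
        (if 2*(j:ℕ) ≤ S0f m n l + (i:ℕ) then α i - β j else 0)
        = ∑ j : Fin l, (if n ≤ (j:ℕ) ∧ 2*(j:ℕ) ≤ S0f m n l + (i:ℕ) then α i - β j else 0) := by
      intro i
      rw [Finset.sum_filter]
      refine Finset.sum_congr rfl fun j _ => ?_
      rw [ite_and]
    rw [Finset.sum_congr rfl fun i _ => e1 i]
    rw [sum_ite_sub (fun (i : Fin n) (j : Fin l) =>
      n ≤ (j:ℕ) ∧ 2*(j:ℕ) ≤ S0f m n l + (i:ℕ)) α β]
    rfl
  have h4 : (∑ i : Fin n, ∑ j ∈ Finset.Ioi i,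
      (if 2*(j:ℕ) ≤ S0f m n l + (i:ℕ) then α i - β (Fin.castLE hnl.le j) else 0))
      = ∑ i : Fin n, (N2c m n l (i:ℕ) : ℝ) * α i
        - ∑ j : Fin l, (M2c m n l (j:ℕ) : ℝ) * β j := by
    have e1 : ∀ i : Fin n, ∑ j ∈ Finset.Ioi i,
        (if 2*(j:ℕ) ≤ S0f m n l + (i:ℕ) then α i - β (Fin.castLE hnl.le j) else 0)
        = ∑ j : Fin n, (if (i:ℕ) < (j:ℕ) ∧ 2*(j:ℕ) ≤ S0f m n l + (i:ℕ)
            then α i - β (Fin.castLE hnl.le j) else 0) := by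
      intro i
      have hIoi : Finset.Ioi i = Finset.univ.filter (fun j : Fin n => (i:ℕ) < (j:ℕ)) := by
        ext j
        simp only [Finset.mem_Ioi, Finset.mem_filter, Finset.mem_univ, true_and, Fin.lt_def]
      rw [hIoi, Finset.sum_filter]
      refine Finset.sum_congr rfl fun j _ => ?_
      rw [ite_and]
    rw [Finset.sum_congr rfl fun i _ => e1 i]
    rw [sum_ite_sub (fun (i : Fin n) (j : Fin n) =>
      (i:ℕ) < (j:ℕ) ∧ 2*(j:ℕ) ≤ S0f m n l + (i:ℕ)) α (fun j => β (Fin.castLE hnl.le j))]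
    have e2 : ∑ j : Fin n,
        ((Finset.univ.filter fun i : Fin n =>
          (i:ℕ) < (j:ℕ) ∧ 2*(j:ℕ) ≤ S0f m n l + (i:ℕ)).card : ℝ) * β (Fin.castLE hnl.le j)
        = ∑ j : Fin l, (M2c m n l (j:ℕ) : ℝ) * β j := by
      have e3 : ∀ j : Fin n, M2c m n l (j:ℕ)
          = (Finset.univ.filter fun i : Fin n =>
              (i:ℕ) < (j:ℕ) ∧ 2*(j:ℕ) ≤ S0f m n l + (i:ℕ)).card := by
        intro j
        unfold M2c
        rw [if_pos j.isLt]
      rw [← Finset.sum_congr rfl fun (j : Fin n) _ => by rw [← e3 j]]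
      exact reindex_fin hnl.le β (M2c m n l)
        (fun x hx => by
          have hxn : ¬ x < n := by omega
          unfold M2c
          rw [if_neg hxn])
    rw [e2]
    rfl
  have h1 : ∑ i : Fin n, ((n : ℝ) - (i : ℕ)) * α i
      = ∑ i : Fin n, (((n - (i:ℕ) : ℕ)) : ℝ) * α i := by
    refine Finset.sum_congr rfl fun i _ => ?_
    rw [Nat.cast_sub i.isLt.le]
  have h2 : ∑ j : Fin l, (if (j : ℕ) ≤ n then (l : ℝ) + m - n - 1 - (j : ℕ)
        else (l : ℝ) + m - 1 - 2 * (j : ℕ)) * β j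
      = ∑ j : Fin l, (cNf m n l (j:ℕ) : ℝ) * β j := by
    refine Finset.sum_congr rfl fun j _ => ?_
    congr 1
    by_cases h : (j:ℕ) ≤ n
    · have e : cNf m n l (j:ℕ) = l + m - (n+1+(j:ℕ)) := by unfold cNf; rw [if_pos h]; omega
      rw [e, Nat.cast_sub (by omega), if_pos h]
      push_cast
      ring
    · have e : cNf m n l (j:ℕ) = l + m - (1+2*(j:ℕ)) := by unfold cNf; rw [if_neg h]; omega
      rw [e, Nat.cast_sub (by omega), if_neg h]
      push_cast
      ring
  have merge1 : ∑ i : Fin n, (((n - (i:ℕ) : ℕ)) : ℝ) * α i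
      + ∑ i : Fin n, (N1c m n l (i:ℕ) : ℝ) * α i
      + ∑ i : Fin n, (N2c m n l (i:ℕ) : ℝ) * α i
      = ∑ i : Fin n, (aNc m n l (i:ℕ) : ℝ) * α i := by
    rw [← Finset.sum_add_distrib, ← Finset.sum_add_distrib]
    refine Finset.sum_congr rfl fun i _ => ?_
    unfold aNc
    push_cast
    ring
  have merge2 : ∑ j : Fin l, (cNf m n l (j:ℕ) : ℝ) * β j
      - ∑ j : Fin l, (M1c m n l (j:ℕ) : ℝ) * β j
      - ∑ j : Fin l, (M2c m n l (j:ℕ) : ℝ) * β j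
      = ∑ j : Fin l, ((cNf m n l (j:ℕ) : ℝ) - (M1c m n l (j:ℕ) : ℝ)
          - (M2c m n l (j:ℕ) : ℝ)) * β j := by
    rw [← Finset.sum_sub_distrib, ← Finset.sum_sub_distrib]
    exact Finset.sum_congr rfl fun j _ => by ring
  rw [h1, h2, h3, h4]
  linarith [merge1, merge2]

private lemma filter_sum_aN {m n l k : ℕ} (hn : 0 < n) (hnl : n < l) (hlm : l ≤ m)
    (hk : k ≤ n) :
    ∑ i ∈ Finset.univ.filter (fun i : Fin n => k ≤ (i:ℕ)), (aNc m n l (i:ℕ) : ℝ)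
      = ∑ i ∈ Finset.Ico k n, (aNf m n l i : ℝ) := by
  classical
  have h1 : ∑ i ∈ Finset.univ.filter (fun i : Fin n => k ≤ (i:ℕ)), (aNc m n l (i:ℕ) : ℝ)
      = ∑ i : Fin n, (if k ≤ (i:ℕ) then (aNf m n l (i:ℕ) : ℝ) else 0) := by
    rw [Finset.sum_filter]
    refine Finset.sum_congr rfl fun i _ => ?_
    rw [aNc_eq]
  rw [h1, Fin.sum_univ_eq_sum_range (fun x => if k ≤ x then (aNf m n l x : ℝ) else 0) n,
    ← Finset.sum_filter]
  have h2 : (Finset.range n).filter (fun x => k ≤ x) = Finset.Ico k n := by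
    ext x
    simp only [Finset.mem_filter, Finset.mem_range, Finset.mem_Ico]
    omega
  rw [h2]

private lemma eps_lower {m n l k : ℕ} (hn : 0 < n) (hnl : n < l) (hlm : l ≤ m)
    (hk : k ≤ n) (α : Fin n → ℝ) (β : Fin l → ℝ)
    (hβ0 : ∀ j, 0 ≤ β j) (hα0 : ∀ i, 0 ≤ α i)
    (hsc : ∑ i : Fin n, max (1 - α i) 0 ≤ (k : ℝ)) :
    ∑ i ∈ Finset.Ico k n, (aNf m n l i : ℝ) ≤
    ∑ i : Fin n, ((n : ℝ) - (i : ℕ)) * α i +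
    ∑ j : Fin l, (if (j : ℕ) ≤ n then (l : ℝ) + m - n - 1 - (j : ℕ)
        else (l : ℝ) + m - 1 - 2 * (j : ℕ)) * β j +
    (∑ i : Fin n, ∑ j ∈ Finset.univ.filter (fun j : Fin l => n ≤ (j : ℕ)),
      max (α i - β j) 0) +
    (∑ i : Fin n, ∑ j ∈ Finset.Ioi i, max (α i - β (Fin.castLE hnl.le j)) 0) := by
  classical
  have step3 : (∑ i : Fin n, ∑ j ∈ Finset.univ.filter (fun j : Fin l => n ≤ (j : ℕ)),
      (if 2*(j:ℕ) ≤ S0f m n l + (i:ℕ) then α i - β j else 0))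
      ≤ ∑ i : Fin n, ∑ j ∈ Finset.univ.filter (fun j : Fin l => n ≤ (j : ℕ)),
        max (α i - β j) 0 := by
    refine Finset.sum_le_sum fun i _ => Finset.sum_le_sum fun j _ => ?_
    split_ifs
    · exact le_max_left _ _
    · exact le_max_right _ _
  have step4 : (∑ i : Fin n, ∑ j ∈ Finset.Ioi i,
      (if 2*(j:ℕ) ≤ S0f m n l + (i:ℕ) then α i - β (Fin.castLE hnl.le j) else 0))
      ≤ ∑ i : Fin n, ∑ j ∈ Finset.Ioi i, max (α i - β (Fin.castLE hnl.le j)) 0 := by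
    refine Finset.sum_le_sum fun i _ => Finset.sum_le_sum fun j _ => ?_
    split_ifs
    · exact le_max_left _ _
    · exact le_max_right _ _
  have hmid := mid_eq hn hnl hlm α β
  have stepβ : (0:ℝ) ≤ ∑ j : Fin l, ((cNf m n l (j:ℕ) : ℝ) - (M1c m n l (j:ℕ) : ℝ)
      - (M2c m n l (j:ℕ) : ℝ)) * β j := by
    refine Finset.sum_nonneg fun j _ => mul_nonneg ?_ (hβ0 j)
    have h := coef_le hn hnl hlm (j := (j:ℕ)) j.isLt
    have h' : ((M1c m n l (j:ℕ) + M2c m n l (j:ℕ) : ℕ) : ℝ) ≤ (cNf m n l (j:ℕ) : ℝ) :=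
      Nat.cast_le.2 h
    push_cast at h'
    linarith
  have stepα : ∑ i ∈ Finset.univ.filter (fun i : Fin n => k ≤ (i:ℕ)), (aNc m n l (i:ℕ) : ℝ)
      ≤ ∑ i : Fin n, (aNc m n l (i:ℕ) : ℝ) * α i := by
    refine weights_bound hk (fun i => aNc m n l (i:ℕ)) ?_ α hα0 hsc
    intro i j hij
    show aNc m n l (j:ℕ) ≤ aNc m n l (i:ℕ)
    rw [aNc_eq, aNc_eq]
    exact aNf_mono hnl hlm hij
  rw [← filter_sum_aN hn hnl hlm hk]
  linarith [hmid, step3, step4, stepβ, stepα]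

private lemma eps_cand {m n l k : ℕ} (hn : 0 < n) (hnl : n < l) (hlm : l ≤ m)
    (hk : k ≤ n) :
    ∑ i : Fin n, ((n : ℝ) - (i : ℕ)) * (if (i:ℕ) < k then (0:ℝ) else 1) +
    ∑ j : Fin l, (if (j : ℕ) ≤ n then (l : ℝ) + m - n - 1 - (j : ℕ)
        else (l : ℝ) + m - 1 - 2 * (j : ℕ)) *
        (if 2*(j:ℕ) ≤ S0f m n l + k then (0:ℝ) else 1) +
    (∑ i : Fin n, ∑ j ∈ Finset.univ.filter (fun j : Fin l => n ≤ (j : ℕ)),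
      max ((if (i:ℕ) < k then (0:ℝ) else 1)
        - (if 2*(j:ℕ) ≤ S0f m n l + k then (0:ℝ) else 1)) 0) +
    (∑ i : Fin n, ∑ j ∈ Finset.Ioi i,
      max ((if (i:ℕ) < k then (0:ℝ) else 1)
        - (if 2*((Fin.castLE hnl.le j : Fin l):ℕ) ≤ S0f m n l + k then (0:ℝ) else 1)) 0)
    = ∑ i ∈ Finset.Ico k n, (aNf m n l i : ℝ) := by
  classical
  set α : Fin n → ℝ := fun i => if (i:ℕ) < k then (0:ℝ) else 1 with hα
  set β : Fin l → ℝ := fun j => if 2*(j:ℕ) ≤ S0f m n l + k then (0:ℝ) else 1 with hβ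
  have hterm : ∀ (S iv jv : ℕ),
      max ((if iv < k then (0:ℝ) else 1) - (if 2*jv ≤ S + k then (0:ℝ) else 1)) 0
      = (if 2*jv ≤ S + iv
          then (if iv < k then (0:ℝ) else 1) - (if 2*jv ≤ S + k then (0:ℝ) else 1)
          else 0) := by
    intro S iv jv
    split_ifs <;> first | (exfalso; omega) | norm_num
  have step3 : (∑ i : Fin n, ∑ j ∈ Finset.univ.filter (fun j : Fin l => n ≤ (j : ℕ)),
      max (α i - β j) 0)
      = ∑ i : Fin n, ∑ j ∈ Finset.univ.filter (fun j : Fin l => n ≤ (j : ℕ)),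
        (if 2*(j:ℕ) ≤ S0f m n l + (i:ℕ) then α i - β j else 0) :=
    Finset.sum_congr rfl fun i _ => Finset.sum_congr rfl fun j _ => hterm (S0f m n l) (i:ℕ) (j:ℕ)
  have step4 : (∑ i : Fin n, ∑ j ∈ Finset.Ioi i, max (α i - β (Fin.castLE hnl.le j)) 0)
      = ∑ i : Fin n, ∑ j ∈ Finset.Ioi i,
        (if 2*(j:ℕ) ≤ S0f m n l + (i:ℕ) then α i - β (Fin.castLE hnl.le j) else 0) := by
    refine Finset.sum_congr rfl fun i _ => Finset.sum_congr rfl fun j _ => ?_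
    have h := hterm (S0f m n l) (i:ℕ) ((Fin.castLE hnl.le j : Fin l):ℕ)
    exact h
  have hmid := mid_eq hn hnl hlm α β
  have stepβ : ∑ j : Fin l, ((cNf m n l (j:ℕ) : ℝ) - (M1c m n l (j:ℕ) : ℝ)
      - (M2c m n l (j:ℕ) : ℝ)) * β j = 0 := by
    refine Finset.sum_eq_zero fun j _ => ?_
    by_cases h : 2*(j:ℕ) ≤ S0f m n l + k
    · have : β j = 0 := by rw [hβ]; exact if_pos h
      rw [this, mul_zero]
    · have hco := coef_eq hn hnl hlm hk (j := (j:ℕ)) j.isLt h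
      have h' : ((M1c m n l (j:ℕ) + M2c m n l (j:ℕ) : ℕ) : ℝ) = (cNf m n l (j:ℕ) : ℝ) := by
        rw [hco]
      push_cast at h'
      have : (cNf m n l (j:ℕ) : ℝ) - (M1c m n l (j:ℕ) : ℝ) - (M2c m n l (j:ℕ) : ℝ) = 0 := by
        linarith
      rw [this, zero_mul]
  have stepα : ∑ i : Fin n, (aNc m n l (i:ℕ) : ℝ) * α i
      = ∑ i ∈ Finset.univ.filter (fun i : Fin n => k ≤ (i:ℕ)), (aNc m n l (i:ℕ) : ℝ) := by
    rw [Finset.sum_filter]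
    refine Finset.sum_congr rfl fun i _ => ?_
    by_cases h : (i:ℕ) < k
    · have h2 : ¬ k ≤ (i:ℕ) := by omega
      simp [hα, h, h2]
    · have h2 : k ≤ (i:ℕ) := by omega
      simp [hα, h, h2]
  rw [step3, step4] at *
  rw [hmid, stepβ, add_zero, stepα, filter_sum_aN hn hnl hlm hk]

/-- **Optimization problem of Section III-B-1** (case `n < l ≤ m`): the infimum of
`ε(α,β) = ∑_{i=1}^n (n+1−i)α_i + ∑_{i=1}^{n+1} (l+m−n−i)β_i + ∑_{i=n+2}^l (l+m+1−2i)β_i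
+ ∑_{i=1}^n ∑_{j=n+1}^l (α_i−β_j)⁺ + ∑_{1≤i<j≤n} (α_i−β_j)⁺` over the outage region at
integer multiplexing gain `k` equals `(l−k)(n−k) − ⌊((n−(m−l)−k)⁺)²/4⌋`.
(0-based indices; the two `β`-sums are written as a single sum over `i = 1, …, l`,
with coefficient `l+m−n−1−i` for `i ≤ n` and `l+m−1−2i` for `i > n`, 0-based.) -/
theorem outage_exponent_inf' {m n l : ℕ} (hn : 0 < n) (hnl : n < l) (hlm : l ≤ m)
    {k : ℕ} (hk : k ≤ n) :
    sInf ((fun p : (Fin n → ℝ) × (Fin l → ℝ) =>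
        ∑ i : Fin n, ((n : ℝ) - (i : ℕ)) * p.1 i +
        ∑ i : Fin l, (if (i : ℕ) ≤ n then (l : ℝ) + m - n - 1 - (i : ℕ)
            else (l : ℝ) + m - 1 - 2 * (i : ℕ)) * p.2 i +
        ∑ i : Fin n, ∑ j ∈ Finset.univ.filter (fun j : Fin l => n ≤ (j : ℕ)),
          max (p.1 i - p.2 j) 0 +
        ∑ i : Fin n, ∑ j ∈ Finset.Ioi i, max (p.1 i - p.2 (Fin.castLE hnl.le j)) 0) ''
      {p : (Fin n → ℝ) × (Fin l → ℝ) |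
        0 ≤ p.2 ⟨0, hn.trans hnl⟩ ∧ Monotone p.2 ∧ Monotone p.1 ∧
        (∀ i : Fin n, p.2 (Fin.castLE hnl.le i) ≤ p.1 i) ∧
        ∑ i : Fin n, max (1 - p.1 i) 0 ≤ (k : ℝ)}) =
    ((l : ℝ) - k) * ((n : ℝ) - k) -
      (⌊(max ((n : ℝ) - ((m : ℝ) - l) - k) 0) ^ 2 / 4⌋ : ℝ) := by
  classical
  set T : ℝ := ∑ i ∈ Finset.Ico k n, (aNf m n l i : ℝ) with hT
  have hRHS : ((l : ℝ) - k) * ((n : ℝ) - k) -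
      (⌊(max ((n : ℝ) - ((m : ℝ) - l) - k) 0) ^ 2 / 4⌋ : ℝ) = T := by
    have hmax : max ((n : ℝ) - ((m : ℝ) - l) - k) 0 = ((n + l - (m + k) : ℕ) : ℝ) := by
      rcases le_or_gt (n + l) (m + k) with h | h
      · have h0 : (n + l - (m + k) : ℕ) = 0 := by omega
        rw [h0, max_eq_right]
        · simp
        · have hc : ((n:ℝ) + l) ≤ ((m:ℝ) + k) := by exact_mod_cast h
          linarith
      · rw [max_eq_left, Nat.cast_sub (by omega)]
        · push_cast
          ring
        · have hc : ((m:ℝ) + k) ≤ ((n:ℝ) + l) := by exact_mod_cast h.le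
          linarith
    have hsq : (max ((n : ℝ) - ((m : ℝ) - l) - k) 0) ^ 2
        = (((n + l - (m + k))^2 : ℕ) : ℝ) := by
      rw [hmax]
      push_cast
      ring
    rw [hsq, floor_nat_div4]
    have hz := sum_aNf hn hnl hlm (n - k) k (by omega)
    have hTz : T = (↑(∑ i ∈ Finset.Ico k n, ((aNf m n l i : ℤ))) : ℝ) := by
      rw [hT]
      push_cast
      rfl
    rw [hTz, hz]
    push_cast
    ring
  rw [hRHS]
  set p₀ : (Fin n → ℝ) × (Fin l → ℝ) :=
    (fun i => if (i:ℕ) < k then (0:ℝ) else 1,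
     fun j => if 2*(j:ℕ) ≤ S0f m n l + k then (0:ℝ) else 1) with hp₀
  have hS0 : n + 1 ≤ S0f m n l ∧ S0f m n l = l + m - n - 1 := by
    unfold S0f
    omega
  have hfeas : p₀ ∈ {p : (Fin n → ℝ) × (Fin l → ℝ) |
      0 ≤ p.2 ⟨0, hn.trans hnl⟩ ∧ Monotone p.2 ∧ Monotone p.1 ∧
      (∀ i : Fin n, p.2 (Fin.castLE hnl.le i) ≤ p.1 i) ∧
      ∑ i : Fin n, max (1 - p.1 i) 0 ≤ (k : ℝ)} := by
    obtain ⟨hS1, hS2⟩ := hS0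
    refine ⟨?_, ?_, ?_, ?_, ?_⟩
    · show (0:ℝ) ≤ if 2*((⟨0, hn.trans hnl⟩ : Fin l):ℕ) ≤ S0f m n l + k then (0:ℝ) else 1
      split_ifs <;> norm_num
    · intro a b hab
      have hab' : (a:ℕ) ≤ (b:ℕ) := hab
      show (if 2*(a:ℕ) ≤ S0f m n l + k then (0:ℝ) else 1)
        ≤ (if 2*(b:ℕ) ≤ S0f m n l + k then (0:ℝ) else 1)
      split_ifs <;> first | (exfalso; omega) | norm_num
    · intro a b hab
      have hab' : (a:ℕ) ≤ (b:ℕ) := hab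
      show (if (a:ℕ) < k then (0:ℝ) else 1) ≤ (if (b:ℕ) < k then (0:ℝ) else 1)
      split_ifs <;> first | (exfalso; omega) | norm_num
    · intro i
      show (if 2*((Fin.castLE hnl.le i : Fin l):ℕ) ≤ S0f m n l + k then (0:ℝ) else 1)
        ≤ (if (i:ℕ) < k then (0:ℝ) else 1)
      have hcast : ((Fin.castLE hnl.le i : Fin l):ℕ) = (i:ℕ) := rfl
      rw [hcast]
      have hin : (i:ℕ) < n := i.isLt
      split_ifs <;> first | (exfalso; omega) | norm_num
    · have he : ∀ i : Fin n, max (1 - (if (i:ℕ) < k then (0:ℝ) else 1)) 0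
          = (if (i:ℕ) < k then (1:ℝ) else 0) := by
        intro i
        split_ifs <;> norm_num
      show ∑ i : Fin n, max (1 - (if (i:ℕ) < k then (0:ℝ) else 1)) 0 ≤ (k:ℝ)
      rw [Finset.sum_congr rfl fun i _ => he i, ← Finset.sum_filter,
        Finset.sum_const, card_filter_fin' n 0 k _ (fun i => by omega)]
      have hmk : min k n - 0 = k := by omega
      rw [hmk, nsmul_eq_mul, mul_one]
  have hval : (fun p : (Fin n → ℝ) × (Fin l → ℝ) =>
        ∑ i : Fin n, ((n : ℝ) - (i : ℕ)) * p.1 i +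
        ∑ i : Fin l, (if (i : ℕ) ≤ n then (l : ℝ) + m - n - 1 - (i : ℕ)
            else (l : ℝ) + m - 1 - 2 * (i : ℕ)) * p.2 i +
        ∑ i : Fin n, ∑ j ∈ Finset.univ.filter (fun j : Fin l => n ≤ (j : ℕ)),
          max (p.1 i - p.2 j) 0 +
        ∑ i : Fin n, ∑ j ∈ Finset.Ioi i, max (p.1 i - p.2 (Fin.castLE hnl.le j)) 0) p₀
      = T := by
    rw [hT]
    exact eps_cand hn hnl hlm hk
  have himg : T ∈ ((fun p : (Fin n → ℝ) × (Fin l → ℝ) =>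
        ∑ i : Fin n, ((n : ℝ) - (i : ℕ)) * p.1 i +
        ∑ i : Fin l, (if (i : ℕ) ≤ n then (l : ℝ) + m - n - 1 - (i : ℕ)
            else (l : ℝ) + m - 1 - 2 * (i : ℕ)) * p.2 i +
        ∑ i : Fin n, ∑ j ∈ Finset.univ.filter (fun j : Fin l => n ≤ (j : ℕ)),
          max (p.1 i - p.2 j) 0 +
        ∑ i : Fin n, ∑ j ∈ Finset.Ioi i, max (p.1 i - p.2 (Fin.castLE hnl.le j)) 0) ''
      {p : (Fin n → ℝ) × (Fin l → ℝ) |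
        0 ≤ p.2 ⟨0, hn.trans hnl⟩ ∧ Monotone p.2 ∧ Monotone p.1 ∧
        (∀ i : Fin n, p.2 (Fin.castLE hnl.le i) ≤ p.1 i) ∧
        ∑ i : Fin n, max (1 - p.1 i) 0 ≤ (k : ℝ)}) := ⟨p₀, hfeas, hval⟩
  have hlow : ∀ b ∈ ((fun p : (Fin n → ℝ) × (Fin l → ℝ) =>
        ∑ i : Fin n, ((n : ℝ) - (i : ℕ)) * p.1 i +
        ∑ i : Fin l, (if (i : ℕ) ≤ n then (l : ℝ) + m - n - 1 - (i : ℕ)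
            else (l : ℝ) + m - 1 - 2 * (i : ℕ)) * p.2 i +
        ∑ i : Fin n, ∑ j ∈ Finset.univ.filter (fun j : Fin l => n ≤ (j : ℕ)),
          max (p.1 i - p.2 j) 0 +
        ∑ i : Fin n, ∑ j ∈ Finset.Ioi i, max (p.1 i - p.2 (Fin.castLE hnl.le j)) 0) ''
      {p : (Fin n → ℝ) × (Fin l → ℝ) |
        0 ≤ p.2 ⟨0, hn.trans hnl⟩ ∧ Monotone p.2 ∧ Monotone p.1 ∧
        (∀ i : Fin n, p.2 (Fin.castLE hnl.le i) ≤ p.1 i) ∧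
        ∑ i : Fin n, max (1 - p.1 i) 0 ≤ (k : ℝ)}), T ≤ b := by
    rintro b ⟨p, hp, rfl⟩
    obtain ⟨h0, hβm, hαm, hβα, hsc⟩ := hp
    have hβ0 : ∀ j : Fin l, 0 ≤ p.2 j := fun j =>
      le_trans h0 (hβm ((Fin.le_def).mpr (Nat.zero_le _)))
    have hα0 : ∀ i : Fin n, 0 ≤ p.1 i := fun i => le_trans (hβ0 _) (hβα i)
    exact eps_lower hn hnl hlm hk p.1 p.2 hβ0 hα0 hsc
  exact le_antisymm (csInf_le ⟨T, fun b hb => hlow b hb⟩ himg) (le_csInf ⟨T, himg⟩ hlow)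
end

section
/- Let m ≥ n ≥ l ≥ 1 be integers and for real r ∈ [0, l] let D(r) be the infimum of ∑_{i=1}^{l} (n−i+1)·α_i + ∑_{i=1}^{l} (m−n+l−i)·β_i + ∑_{1≤i<j≤l} max(α_i−β_j, 0) over { (α,β) ∈ ℝ^l×ℝ^l : 0 ≤ β₁ ≤ ⋯ ≤ β_l, α₁ ≤ ⋯ ≤ α_l, β_i ≤ α_i for all i, ∑_{i=1}^{l} max(1−α_i, 0) ≤ r }. Define d(k) := (l−k)(n−k) − ⌊(max(l−(m−n)−k, 0))²/4⌋ for integers 0 ≤ k ≤ l. Then D is the piecewise-linear interpolation of the points (k, d(k)): for every r ∈ [0, l) with k = ⌊r⌋, D(r) = (k+1−r)·d(k) + (r−k)·d(k+1), and D(l) = d(l) = 0. -/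
/-- `Dval m n l hl r` is the value of the outage-exponent optimization problem of
Section III-A at (real) multiplexing gain `r`: the infimum of
`∑_{i=1}^l (n−i+1)α_i + ∑_{i=1}^l (m−n+l−i)β_i + ∑_{i<j} (α_i−β_j)⁺`
over `0 ≤ β₁ ≤ ⋯ ≤ β_l`, `α₁ ≤ ⋯ ≤ α_l`, `β_i ≤ α_i`, `∑ (1−α_i)⁺ ≤ r`
(0-based coefficients `n−i` and `m−n+l−1−i`). -/
noncomputable def Dval (m n l : ℕ) (hl : 0 < l) (r : ℝ) : ℝ :=
  sInf ((fun p : (Fin l → ℝ) × (Fin l → ℝ) =>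
      ∑ i : Fin l, ((n : ℝ) - (i : ℕ)) * p.1 i +
      ∑ i : Fin l, ((m : ℝ) - n + l - 1 - (i : ℕ)) * p.2 i +
      ∑ i : Fin l, ∑ j ∈ Finset.Ioi i, max (p.1 i - p.2 j) 0) ''
    {p : (Fin l → ℝ) × (Fin l → ℝ) |
      0 ≤ p.2 ⟨0, hl⟩ ∧ Monotone p.2 ∧ Monotone p.1 ∧
      (∀ i, p.2 i ≤ p.1 i) ∧ ∑ i : Fin l, max (1 - p.1 i) 0 ≤ r})

/-- `dPt m n l k = (l−k)(n−k) − ⌊((l−(m−n)−k)⁺)²/4⌋`. -/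
noncomputable def dPt (m n l : ℕ) (k : ℤ) : ℝ :=
  ((l : ℝ) - k) * ((n : ℝ) - k) -
    (⌊(max ((l : ℝ) - ((m : ℝ) - n) - k) 0) ^ 2 / 4⌋ : ℝ)

section AuxDMT

open Finset

/-- The linear coefficients after eliminating β. -/
def gam (M n l i : ℕ) : ℕ := (n - i) + min (l - (i+1)) ((M + l - (i+1))/2)

/-- `dnat M n l k = ∑_{i=k}^{l-1} γ_i`. -/
def dnat (M n l k : ℕ) : ℕ := ∑ i ∈ Ico k l, gam M n l i

/-- optimal split point -/
def tk (M l k : ℕ) : ℕ := min l ((M + l + k + 1)/2)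

lemma gam_anti (M n l : ℕ) : Antitone (gam M n l) := by
  apply antitone_nat_of_succ_le
  intro i
  unfold gam
  omega

lemma dnat_succ (M n l k : ℕ) (hk : k < l) :
    dnat M n l k = gam M n l k + dnat M n l (k+1) := by
  unfold dnat
  rw [← Finset.sum_Ico_consecutive _ (Nat.le_succ k) hk]
  rw [Finset.sum_Ico_succ_top (Nat.le_refl k), Finset.Ico_self]
  simp [add_comm]

/-- halved square increment -/
lemma sq4_succ (a : ℕ) : (a+1)^2/4 = a^2/4 + (a+1)/2 := by
  rcases Nat.even_or_odd a with ⟨s, rfl⟩ | ⟨s, rfl⟩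
  · have h1 : (s+s+1)^2 = 4*(s*s+s)+1 := by ring
    have h2 : (s+s)^2 = 4*(s*s) := by ring
    omega
  · have h1 : (2*s+1+1)^2 = 4*(s*s+2*s+1) := by ring
    have h2 : (2*s+1)^2 = 4*(s*s+s)+1 := by ring
    omega

/-- Key summation: ∑_{b<L} (b ∸ ⌊(M+b)/2⌋) = ⌊((L∸M)²)/4⌋. -/
lemma key_sum (M L : ℕ) : ∑ b ∈ range L, (b - (M+b)/2) = ((L - M)^2)/4 := by
  induction L with
  | zero => simp
  | succ L ih =>
    rw [Finset.sum_range_succ, ih]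
    rcases le_or_gt M L with h | h
    · have ha : L + 1 - M = (L - M) + 1 := by omega
      rw [ha, sq4_succ]
      omega
    · have h1 : (L - M)^2 = 0 := by
        have : L - M = 0 := by omega
        rw [this]; ring
      have h3 : (L+1-M)^2 = L+1-M := by
        rcases (show L+1-M = 0 ∨ L+1-M = 1 by omega) with e | e <;> rw [e] <;> ring
      rw [h1, h3]
      omega

/-- Gauss sum in subtractive form. -/
lemma gauss (L : ℕ) : 2 * ∑ b ∈ range L, b = L*L - L := by
  induction L with
  | zero => simp
  | succ L ih =>
    rw [Finset.sum_range_succ]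
    have h : (L+1)*(L+1) = L*L + 2*L + 1 := by ring
    have h2 : L ≤ L*L := by
      rcases Nat.eq_zero_or_pos L with e | e
      · simp [e]
      · calc L = 1*L := (one_mul L).symm
          _ ≤ L*L := Nat.mul_le_mul_right L e
    omega

/-- the `v·(u−M) = ⌊a²/4⌋` identity for the optimal split point. -/
lemma q4_eq (M L : ℕ) :
    (L - min L ((M+L+1)/2)) * (min L ((M+L+1)/2) - M) = ((L-M)^2)/4 := by
  rcases le_or_gt L M with h | h
  · have h1 : min L ((M+L+1)/2) = L := by omega
    have h2 : (L-M)^2 = 0 := by have : L - M = 0 := by omega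
                                rw [this]; ring
    rw [h1, h2]; simp
  · have h1 : min L ((M+L+1)/2) = (M+L+1)/2 := by omega
    rw [h1]
    rcases Nat.even_or_odd (L - M) with ⟨s, hs⟩ | ⟨s, hs⟩
    · have e1 : L - (M+L+1)/2 = s := by omega
      have e2 : (M+L+1)/2 - M = s := by omega
      have e3 : (L-M)^2 = 4*(s*s) := by rw [hs]; ring
      rw [e1, e2, e3]; omega
    · have e1 : L - (M+L+1)/2 = s := by omega
      have e2 : (M+L+1)/2 - M = s+1 := by omega
      have e3 : (L-M)^2 = 4*(s*(s+1)) + 1 := by rw [hs]; ring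
      rw [e1, e2, e3]; omega

lemma dnat_closed (M n l k : ℕ) (hkl : k ≤ l) (hln : l ≤ n) :
    dnat M n l k + ((l-k-M)^2)/4 = (l-k)*(n-k) := by
  obtain ⟨L, hL⟩ : ∃ L, l - k = L := ⟨_, rfl⟩
  rw [show l-k-M = L-M from by omega, hL]
  have h1 : dnat M n l k = ∑ b ∈ range L, ((n+1-l) + b + min b ((M+b)/2)) := by
    unfold dnat
    rw [Finset.sum_Ico_eq_sum_range, hL, ← Finset.sum_range_reflect]
    apply Finset.sum_congr rfl
    intro b hb
    simp only [Finset.mem_range] at hb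
    have hb' : k + (L - 1 - b) = l - 1 - b := by omega
    rw [hb']
    unfold gam
    omega
  have h2 : ∀ b ∈ range L, ((n+1-l) + b + min b ((M+b)/2)) + (b - (M+b)/2)
      = (n+1-l) + 2*b := by intro b _; omega
  have h3 : dnat M n l k + ∑ b ∈ range L, (b - (M+b)/2)
      = L*(n+1-l) + 2 * ∑ b ∈ range L, b := by
    rw [h1, ← Finset.sum_add_distrib, Finset.sum_congr rfl h2, Finset.sum_add_distrib,
      Finset.mul_sum]
    simp [Finset.sum_const, mul_comm]
  rw [key_sum, gauss] at h3
  have h7 : L*(L-1) = L*L - L := by rw [Nat.mul_sub, Nat.mul_one]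
  have h4 : L*(n+1-l) + (L*L - L) = L*(n-k) := by
    rcases Nat.eq_zero_or_pos L with e | e
    · simp [e]
    · have h6 : n-k = (n+1-l) + (L-1) := by omega
      rw [h6, Nat.mul_add, h7]
  rw [← h4]
  exact h3

lemma floor_div4 (B : ℕ) : ⌊(B:ℝ)/4⌋ = ((B/4 : ℕ) : ℤ) := by
  rw [Int.floor_eq_iff]
  constructor
  · rw [le_div_iff₀ (by norm_num : (0:ℝ) < 4)]
    exact_mod_cast (by omega : ((B/4)*4 : ℕ) ≤ B)
  · rw [div_lt_iff₀ (by norm_num : (0:ℝ) < 4)]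
    have hh : B < (B/4+1)*4 := by omega
    exact_mod_cast hh


lemma dPt_eq_dnat (m n l k : ℕ) (hkl : k ≤ l) (hln : l ≤ n) (hnm : n ≤ m) :
    dPt m n l (k:ℤ) = (dnat (m-n) n l k : ℝ) := by
  set M := m - n with hM
  set A := l - M - k with hA
  have hmn : (m:ℝ) - n = (M:ℝ) := by
    rw [hM, Nat.cast_sub hnm]
  have hmax : max ((l : ℝ) - ((m : ℝ) - n) - ((k:ℤ):ℝ)) 0 = (A : ℝ) := by
    rw [hmn]
    push_cast
    rcases le_or_gt (M+k) l with h | h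
    · rw [max_eq_left]
      · rw [hA, Nat.cast_sub (show k ≤ l - M by omega), Nat.cast_sub (show M ≤ l by omega)]
      · have : (M:ℝ) + k ≤ l := by exact_mod_cast (show M + k ≤ l from h)
        linarith
    · rw [max_eq_right, show A = 0 from by omega]
      · simp
      · have : (l:ℝ) ≤ M + k := by exact_mod_cast (show l ≤ M + k from le_of_lt h)
        linarith
  have hfloor : ⌊(max ((l : ℝ) - ((m : ℝ) - n) - ((k:ℤ):ℝ)) 0) ^ 2 / 4⌋ = ((A^2/4 : ℕ) : ℤ) := by
    rw [hmax, show ((A:ℝ))^2 = ((A^2 : ℕ) : ℝ) from by push_cast; ring, floor_div4]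
  have hD := dnat_closed M n l k hkl hln
  rw [show l - k - M = A from by omega] at hD
  unfold dPt
  rw [hfloor]
  have hcast : ((l:ℝ) - (k:ℝ)) * ((n:ℝ) - (k:ℝ)) = (((l-k) : ℕ):ℝ) * (((n-k) : ℕ):ℝ) := by
    rw [Nat.cast_sub (show k ≤ l from hkl), Nat.cast_sub (show k ≤ n from hkl.trans hln)]
  have hsum : (((l-k) : ℕ):ℝ) * (((n-k):ℕ):ℝ) = (dnat M n l k : ℝ) + ((A^2/4 : ℕ) : ℝ) := by
    exact_mod_cast hD.symm
  have e1 : ((((A^2/4 : ℕ) : ℤ)):ℝ) = ((A^2/4 : ℕ) : ℝ) := Int.cast_natCast _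
  have e2 : (((k:ℤ)):ℝ) = (k:ℝ) := Int.cast_natCast _
  rw [e1, e2, hcast, hsum]
  ring

/-- pair predicate for the cross-term selection -/
def Pnat (M l i j : ℕ) : Prop := i < j ∧ 2*j ≤ M + l - 1 + i

instance (M l i j : ℕ) : Decidable (Pnat M l i j) := by unfold Pnat; infer_instance

lemma lower_bound (m n l : ℕ) (hl : 0 < l) (hln : l ≤ n) (hnm : n ≤ m)
    (α β : Fin l → ℝ) (hb0 : 0 ≤ β ⟨0, hl⟩) (hbm : Monotone β) (hba : ∀ i, β i ≤ α i) :
    ∑ i : Fin l, ((gam (m-n) n l (i:ℕ) : ℕ) : ℝ) * α i ≤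
      ∑ i : Fin l, ((n : ℝ) - (i : ℕ)) * α i +
      ∑ i : Fin l, ((m : ℝ) - n + l - 1 - (i : ℕ)) * β i +
      ∑ i : Fin l, ∑ j ∈ Finset.Ioi i, max (α i - β j) 0 := by
  set M := m - n with hM
  have hβ : ∀ j, 0 ≤ β j := fun j => hb0.trans (hbm (by simp [Fin.le_def]))
  have hα : ∀ i, 0 ≤ α i := fun i => (hβ i).trans (hba i)
  have hmn : (m:ℝ) - n = (M:ℝ) := by rw [hM, Nat.cast_sub hnm]
  -- counting
  have count1 : ∀ i : Fin l,
      (∑ j : Fin l, if Pnat M l (i:ℕ) (j:ℕ) then (1:ℝ) else 0)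
        = ((min (l - ((i:ℕ)+1)) ((M + l - ((i:ℕ)+1))/2) : ℕ) : ℝ) := by
    intro i
    have hi := i.isLt
    rw [Fin.sum_univ_eq_sum_range
      (fun j => if Pnat M l (i:ℕ) j then (1:ℝ) else 0) l]
    rw [Finset.sum_boole]
    have hset : (range l).filter (fun j => Pnat M l (i:ℕ) j)
        = Finset.Ico ((i:ℕ)+1) (min l ((M + l - 1 + (i:ℕ))/2 + 1)) := by
      ext x
      rw [Finset.mem_filter]
      simp only [Finset.mem_filter, Finset.mem_range, Finset.mem_Ico, Pnat]
      omega
    rw [hset, Nat.card_Ico]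
    congr 1
    omega
  have count2 : ∀ j : Fin l,
      (∑ i : Fin l, if Pnat M l (i:ℕ) (j:ℕ) then (1:ℝ) else 0)
        = (((j:ℕ) - (2*(j:ℕ) - (M + l - 1)) : ℕ) : ℝ) := by
    intro j
    have hj := j.isLt
    rw [Fin.sum_univ_eq_sum_range
      (fun i => if Pnat M l i (j:ℕ) then (1:ℝ) else 0) l]
    rw [Finset.sum_boole]
    have hset : (range l).filter (fun i => Pnat M l i (j:ℕ))
        = Finset.Ico (2*(j:ℕ) - (M + l - 1)) (j:ℕ) := by
      ext x
      rw [Finset.mem_filter]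
      simp only [Finset.mem_filter, Finset.mem_range, Finset.mem_Ico, Pnat]
      omega
    rw [hset, Nat.card_Ico]
  -- step 1 : cross term lower bound
  have step1 : ∑ i : Fin l, (∑ j : Fin l, if Pnat M l (i:ℕ) (j:ℕ) then (α i - β j) else 0) ≤
      ∑ i : Fin l, ∑ j ∈ Finset.Ioi i, max (α i - β j) 0 := by
    apply Finset.sum_le_sum
    intro i _
    have hIoi : Finset.Ioi i = Finset.univ.filter (fun j => i < j) := by
      ext j; simp
    rw [hIoi, Finset.sum_filter]
    apply Finset.sum_le_sum
    intro j _
    by_cases h1 : Pnat M l (i:ℕ) (j:ℕ)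
    · rw [if_pos h1, if_pos (show i < j from by rw [Fin.lt_def]; exact h1.1)]
      exact le_max_left _ _
    · rw [if_neg h1]
      by_cases h2 : i < j
      · rw [if_pos h2]; exact le_max_right _ _
      · rw [if_neg h2]
  -- step 2 : algebraic identity for the filtered double sum
  have step2 : ∑ i : Fin l, (∑ j : Fin l, if Pnat M l (i:ℕ) (j:ℕ) then (α i - β j) else 0)
      = ∑ i : Fin l, (∑ j : Fin l, if Pnat M l (i:ℕ) (j:ℕ) then (1:ℝ) else 0) * α i
        - ∑ j : Fin l, (∑ i : Fin l, if Pnat M l (i:ℕ) (j:ℕ) then (1:ℝ) else 0) * β j := by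
    have e1 : ∀ i j : Fin l, (if Pnat M l (i:ℕ) (j:ℕ) then (α i - β j) else 0)
        = (if Pnat M l (i:ℕ) (j:ℕ) then (1:ℝ) else 0) * α i - (if Pnat M l (i:ℕ) (j:ℕ) then (1:ℝ) else 0) * β j := by
      intro i j; split_ifs <;> ring
    calc ∑ i : Fin l, (∑ j : Fin l, if Pnat M l (i:ℕ) (j:ℕ) then (α i - β j) else 0)
        = ∑ i : Fin l, ((∑ j : Fin l, (if Pnat M l (i:ℕ) (j:ℕ) then (1:ℝ) else 0) * α i)
            - (∑ j : Fin l, (if Pnat M l (i:ℕ) (j:ℕ) then (1:ℝ) else 0) * β j)) := by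
          apply Finset.sum_congr rfl
          intro i _
          rw [← Finset.sum_sub_distrib]
          apply Finset.sum_congr rfl
          intro j _
          exact e1 i j
      _ = ∑ i : Fin l, (∑ j : Fin l, (if Pnat M l (i:ℕ) (j:ℕ) then (1:ℝ) else 0) * α i)
            - ∑ i : Fin l, (∑ j : Fin l, (if Pnat M l (i:ℕ) (j:ℕ) then (1:ℝ) else 0) * β j) :=
          Finset.sum_sub_distrib _ _
      _ = ∑ i : Fin l, (∑ j : Fin l, if Pnat M l (i:ℕ) (j:ℕ) then (1:ℝ) else 0) * α i
            - ∑ j : Fin l, (∑ i : Fin l, if Pnat M l (i:ℕ) (j:ℕ) then (1:ℝ) else 0) * β j := by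
          rw [Finset.sum_comm (s := Finset.univ) (t := Finset.univ)
            (f := fun (i j : Fin l) => (if Pnat M l (i:ℕ) (j:ℕ) then (1:ℝ) else 0) * β j)]
          congr 1
          · apply Finset.sum_congr rfl; intro i _; rw [Finset.sum_mul]
          · apply Finset.sum_congr rfl; intro j _; rw [Finset.sum_mul]
  -- step 3 : β coefficients dominate the counts
  have step3 : ∑ j : Fin l, (∑ i : Fin l, if Pnat M l (i:ℕ) (j:ℕ) then (1:ℝ) else 0) * β j ≤
      ∑ j : Fin l, ((m : ℝ) - n + l - 1 - (j : ℕ)) * β j := by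
    apply Finset.sum_le_sum
    intro j _
    have hj := j.isLt
    apply mul_le_mul_of_nonneg_right _ (hβ j)
    rw [count2 j]
    have hc : ((m : ℝ) - n + l - 1 - (j : ℕ)) = ((M + l - 1 - (j:ℕ) : ℕ) : ℝ) := by
      rw [show (M + l - 1 - (j:ℕ) : ℕ) = (M+l) - (1 + (j:ℕ)) from by omega,
        Nat.cast_sub (show 1 + (j:ℕ) ≤ M + l from by omega)]
      push_cast
      rw [← hmn]
      ring
    rw [hc]
    exact_mod_cast (show ((j:ℕ) - (2*(j:ℕ) - (M + l - 1)) : ℕ) ≤ M + l - 1 - (j:ℕ) from by omega)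
  -- assemble
  have main : ∑ i : Fin l, ((gam M n l (i:ℕ) : ℕ) : ℝ) * α i
      = ∑ i : Fin l, ((n : ℝ) - (i : ℕ)) * α i
        + ∑ i : Fin l, (∑ j : Fin l, if Pnat M l (i:ℕ) (j:ℕ) then (1:ℝ) else 0) * α i := by
    rw [← Finset.sum_add_distrib]
    apply Finset.sum_congr rfl
    intro i _
    have hi := i.isLt
    rw [count1 i]
    have : ((gam M n l (i:ℕ) : ℕ) : ℝ)
        = ((n : ℝ) - (i:ℕ)) + ((min (l - ((i:ℕ)+1)) ((M + l - ((i:ℕ)+1))/2) : ℕ) : ℝ) := by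
      unfold gam
      push_cast [Nat.cast_sub (show (i:ℕ) ≤ n from by omega)]
      ring
    rw [this, add_mul]
  rw [main]
  linarith [step2, step1, step3]

/-- optimal split point -/

lemma min_sum (M n l k : ℕ) (hk : k ≤ l) :
    ∑ i ∈ range l, min (gam M n l i) (gam M n l k) = k * gam M n l k + dnat M n l k := by
  rw [range_eq_Ico, ← Finset.sum_Ico_consecutive _ (Nat.zero_le k) hk]
  have h1 : ∑ i ∈ Ico 0 k, min (gam M n l i) (gam M n l k) = k * gam M n l k := by
    rw [Finset.sum_congr rfl (fun i hi => ?_), Finset.sum_const, Nat.card_Ico, smul_eq_mul,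
      Nat.sub_zero]
    have : gam M n l k ≤ gam M n l i := gam_anti M n l (by simp at hi; omega)
    omega
  have h2 : ∑ i ∈ Ico k l, min (gam M n l i) (gam M n l k) = dnat M n l k := by
    unfold dnat
    apply Finset.sum_congr rfl
    intro i hi
    have : gam M n l i ≤ gam M n l k := gam_anti M n l (by simp at hi; omega)
    omega
  rw [h1, h2]

lemma value_identity (M n l k : ℕ) (hk : k ≤ l) (hln : l ≤ n) :
    (∑ i ∈ Ico k l, (n - i)) + (∑ j ∈ Ico (tk M l k) l, (M + l - 1 - j))
      + (∑ i ∈ Ico k l, (tk M l k - (i+1))) = dnat M n l k := by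
  have hDC := dnat_closed M n l k hk hln
  obtain ⟨L, hL⟩ : ∃ L, l - k = L := ⟨_, rfl⟩
  rw [hL] at hDC
  have htl : tk M l k ≤ l := min_le_left _ _
  have htk : k ≤ tk M l k := by unfold tk; omega
  obtain ⟨u, hu⟩ : ∃ u, tk M l k - k = u := ⟨_, rfl⟩
  obtain ⟨v, hv⟩ : ∃ v, l - tk M l k = v := ⟨_, rfl⟩
  have huv : u + v = L := by omega
  have hu_eq : u = min L ((M+L+1)/2) := by
    rw [← hu]; unfold tk; omega
  have hq4 : v * (u - M) = ((L-M)^2)/4 := by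
    rw [← q4_eq M L, ← hu_eq]
    have : L - u = v := by omega
    rw [this]
  have hA : ∑ i ∈ Ico k l, (n - i) = ∑ b ∈ range L, ((n+1-l) + b) := by
    rw [Finset.sum_Ico_eq_sum_range, hL, ← Finset.sum_range_reflect]
    apply Finset.sum_congr rfl
    intro b hb
    simp only [Finset.mem_range] at hb
    omega
  have hB : ∑ j ∈ Ico (tk M l k) l, (M + l - 1 - j) = ∑ b ∈ range v, (M + b) := by
    rw [Finset.sum_Ico_eq_sum_range, hv, ← Finset.sum_range_reflect]
    apply Finset.sum_congr rfl
    intro b hb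
    simp only [Finset.mem_range] at hb
    omega
  have hC : ∑ i ∈ Ico k l, (tk M l k - (i+1)) = ∑ b ∈ range u, b := by
    rw [Finset.sum_Ico_eq_sum_range, hL]
    rw [← Finset.sum_range_add_sum_Ico _ (show u ≤ L from by omega)]
    have h2 : ∑ c ∈ Ico u L, (tk M l k - (k + c + 1)) = 0 := by
      apply Finset.sum_eq_zero
      intro c hc
      simp only [Finset.mem_Ico] at hc
      omega
    rw [h2, add_zero, ← Finset.sum_range_reflect]
    apply Finset.sum_congr rfl
    intro b hb
    simp only [Finset.mem_range] at hb
    omega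
  have hA2 : ∑ b ∈ range L, ((n+1-l) + b) = L * (n+1-l) + ∑ b ∈ range L, b := by
    rw [Finset.sum_add_distrib, Finset.sum_const, Finset.card_range, smul_eq_mul]
  have hB2 : ∑ b ∈ range v, (M + b) = v * M + ∑ b ∈ range v, b := by
    rw [Finset.sum_add_distrib, Finset.sum_const, Finset.card_range, smul_eq_mul]
  rw [hA, hB, hC, hA2, hB2]
  have h7 : L*(L-1) = L*L - L := by rw [Nat.mul_sub, Nat.mul_one]
  have h4 : L*(n+1-l) + (L*L - L) = L*(n-k) := by
    rcases Nat.eq_zero_or_pos L with e | e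
    · simp [e]
    · have h6 : n-k = (n+1-l) + (L-1) := by omega
      rw [h6, Nat.mul_add, h7]
  have hL2 : L*L = u*u + 2*(u*v) + v*v := by rw [← huv]; ring
  have hvu : v*(u-M) + v*M = v*u := by
    rcases Nat.eq_zero_or_pos v with e | e
    · simp [e]
    · have hMu : M ≤ u := by omega
      rw [← Nat.left_distrib]
      congr 1
      omega
  have hcomm : v*u = u*v := Nat.mul_comm v u
  have hsq : ∀ w : ℕ, w ≤ w*w := by
    intro w
    rcases Nat.eq_zero_or_pos w with e | e
    · simp [e]
    · exact Nat.le_mul_of_pos_left w e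
  have hu2 := hsq u
  have hv2 := hsq v
  have hL2' := hsq L
  have g1 := gauss L
  have g2 := gauss u
  have g3 := gauss v
  omega

noncomputable def ptv (l t : ℕ) : Fin l → ℝ := fun i => if (i:ℕ) < t then 0 else 1

lemma ptv_mono (l t : ℕ) : Monotone (ptv l t) := by
  intro i j hij
  unfold ptv
  have : (i:ℕ) ≤ (j:ℕ) := hij
  split_ifs <;> norm_num <;> omega

lemma ptv_nonneg (l t : ℕ) (i : Fin l) : 0 ≤ ptv l t i := by
  unfold ptv; split_ifs <;> norm_num

lemma ptv_le (M l k : ℕ) (hk : k ≤ l) (i : Fin l) : ptv l (tk M l k) i ≤ ptv l k i := by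
  have hi := i.isLt
  unfold ptv tk
  split_ifs with h1 h2 <;> try norm_num
  · omega

/-- budget of the vertex point -/
lemma ptv_budget (l k : ℕ) (hk : k ≤ l) :
    ∑ i : Fin l, max (1 - ptv l k i) 0 = (k:ℝ) := by
  have h1 : ∀ i : Fin l, max (1 - ptv l k i) 0 = if (i:ℕ) < k then (1:ℝ) else 0 := by
    intro i; unfold ptv; split_ifs <;> norm_num
  rw [Finset.sum_congr rfl (fun i _ => h1 i)]
  rw [Fin.sum_univ_eq_sum_range (fun i => if i < k then (1:ℝ) else 0) l]
  rw [Finset.sum_boole]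
  have : (range l).filter (fun i => i < k) = range k := by
    ext x; simp only [Finset.mem_filter, Finset.mem_range]; omega
  rw [this, Finset.card_range]

/-- a Fin-sum of a coefficient against the indicator equals an `Ico` sum -/
lemma sum_ind (l t : ℕ) (ht : t ≤ l) (g : ℕ → ℝ) :
    ∑ i : Fin l, g (i:ℕ) * ptv l t i = ∑ i ∈ Ico t l, g i := by
  unfold ptv
  rw [Fin.sum_univ_eq_sum_range (fun i => g i * (if i < t then 0 else 1)) l]
  rw [range_eq_Ico, ← Finset.sum_Ico_consecutive _ (Nat.zero_le t) ht]
  have h1 : ∑ i ∈ Ico 0 t, g i * (if i < t then (0:ℝ) else 1) = 0 := by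
    apply Finset.sum_eq_zero
    intro i hi
    simp only [Finset.mem_Ico] at hi
    rw [if_pos hi.2]; ring
  have h2 : ∀ i ∈ Ico t l, g i * (if i < t then (0:ℝ) else 1) = g i := by
    intro i hi
    simp only [Finset.mem_Ico] at hi
    rw [if_neg (by omega)]; ring
  rw [h1, Finset.sum_congr rfl h2, zero_add]

/-- value of the vertex point -/
lemma ptv_value (m n l k : ℕ) (hk : k ≤ l) (hln : l ≤ n) (hnm : n ≤ m) :
    ∑ i : Fin l, ((n : ℝ) - (i : ℕ)) * ptv l k i +
    ∑ i : Fin l, ((m : ℝ) - n + l - 1 - (i : ℕ)) * ptv l (tk (m-n) l k) i +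
    ∑ i : Fin l, ∑ j ∈ Finset.Ioi i, max (ptv l k i - ptv l (tk (m-n) l k) j) 0
      = (dnat (m-n) n l k : ℝ) := by
  set M := m - n with hM
  set t := tk M l k with htdef
  have htl : t ≤ l := min_le_left _ _
  have hS1 : ∑ i : Fin l, ((n : ℝ) - (i : ℕ)) * ptv l k i
      = ((∑ i ∈ Ico k l, (n - i) : ℕ) : ℝ) := by
    rw [sum_ind l k hk (fun i => (n:ℝ) - i), Nat.cast_sum]
    apply Finset.sum_congr rfl
    intro i hi
    simp only [Finset.mem_Ico] at hi
    rw [Nat.cast_sub (by omega)]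
  have hS2 : ∑ i : Fin l, ((m : ℝ) - n + l - 1 - (i : ℕ)) * ptv l t i
      = ((∑ j ∈ Ico t l, (M + l - 1 - j) : ℕ) : ℝ) := by
    rw [sum_ind l t htl (fun i => (m:ℝ) - n + l - 1 - i), Nat.cast_sum]
    apply Finset.sum_congr rfl
    intro j hj
    simp only [Finset.mem_Ico] at hj
    rw [show (M + l - 1 - j : ℕ) = (M+l) - (1+j) from by omega,
      Nat.cast_sub (show 1 + j ≤ M + l from by omega)]
    push_cast [Nat.cast_sub hnm, hM]
    ring
  have hS3 : ∑ i : Fin l, ∑ j ∈ Finset.Ioi i, max (ptv l k i - ptv l t j) 0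
      = ((∑ i ∈ Ico k l, (t - (i+1)) : ℕ) : ℝ) := by
    have hpt : ∀ i j : Fin l, max (ptv l k i - ptv l t j) 0
        = if (k ≤ (i:ℕ) ∧ (j:ℕ) < t) then (1:ℝ) else 0 := by
      intro i j
      unfold ptv
      split_ifs <;> norm_num <;> omega
    have hinner : ∀ i : Fin l, ∑ j ∈ Finset.Ioi i, max (ptv l k i - ptv l t j) 0
        = (if k ≤ (i:ℕ) then ((t - ((i:ℕ)+1) : ℕ):ℝ) else 0) := by
      intro i
      rw [Finset.sum_congr rfl (fun j _ => hpt i j)]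
      by_cases hki : k ≤ (i:ℕ)
      · rw [if_pos hki]
        have hIoi : Finset.Ioi i = Finset.univ.filter (fun j : Fin l => (i:ℕ) < (j:ℕ)) := by
          ext j
          simp only [Finset.mem_Ioi, Finset.mem_filter, Finset.mem_univ, true_and, Fin.lt_def]
        rw [hIoi, Finset.sum_filter]
        have : ∀ j : Fin l, (if (i:ℕ) < (j:ℕ) then (if (k ≤ (i:ℕ) ∧ (j:ℕ) < t) then (1:ℝ) else 0) else 0)
            = if ((i:ℕ) < (j:ℕ) ∧ (j:ℕ) < t) then (1:ℝ) else 0 := by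
          intro j; split_ifs <;> simp_all <;> omega
        rw [Finset.sum_congr rfl (fun j _ => this j)]
        rw [Fin.sum_univ_eq_sum_range (fun j => if ((i:ℕ) < j ∧ j < t) then (1:ℝ) else 0) l]
        rw [Finset.sum_boole]
        have hset : (range l).filter (fun j => (i:ℕ) < j ∧ j < t) = Finset.Ico ((i:ℕ)+1) t := by
          ext x; simp only [Finset.mem_filter, Finset.mem_range, Finset.mem_Ico]; omega
        rw [hset, Nat.card_Ico]
      · rw [if_neg hki]
        apply Finset.sum_eq_zero
        intro j _
        rw [if_neg (by tauto)]
    rw [Finset.sum_congr rfl (fun i _ => hinner i)]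
    have : ∀ i : Fin l, (if k ≤ (i:ℕ) then ((t - ((i:ℕ)+1) : ℕ):ℝ) else 0)
        = ((t - ((i:ℕ)+1) : ℕ):ℝ) * ptv l k i := by
      intro i; unfold ptv; split_ifs <;> try ring
      · omega
      · omega
    rw [Finset.sum_congr rfl (fun i _ => this i), sum_ind l k hk (fun i => ((t - (i+1) : ℕ):ℝ)),
      Nat.cast_sum]
  rw [hS1, hS2, hS3]
  rw [← Nat.cast_add, ← Nat.cast_add]
  exact_mod_cast congrArg (Nat.cast : ℕ → ℝ) (value_identity M n l k hk hln)

/-- the penalized lower bound -/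
lemma lb_total (m n l k : ℕ) (hl : 0 < l) (hln : l ≤ n) (hnm : n ≤ m) (hk : k < l) (r : ℝ)
    (α β : Fin l → ℝ) (hb0 : 0 ≤ β ⟨0, hl⟩) (hbm : Monotone β) (hba : ∀ i, β i ≤ α i)
    (hbud : ∑ i : Fin l, max (1 - α i) 0 ≤ r) :
    (dnat (m-n) n l k : ℝ) + (gam (m-n) n l k : ℝ) * ((k:ℝ) - r) ≤
      ∑ i : Fin l, ((n : ℝ) - (i : ℕ)) * α i +
      ∑ i : Fin l, ((m : ℝ) - n + l - 1 - (i : ℕ)) * β i +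
      ∑ i : Fin l, ∑ j ∈ Finset.Ioi i, max (α i - β j) 0 := by
  set M := m - n with hM
  have hβ : ∀ j, 0 ≤ β j := fun j => hb0.trans (hbm (by simp [Fin.le_def]))
  have hα : ∀ i, 0 ≤ α i := fun i => (hβ i).trans (hba i)
  have h1 := lower_bound m n l hl hln hnm α β hb0 hbm hba
  have per : ∀ i : Fin l, ((min (gam M n l (i:ℕ)) (gam M n l k) : ℕ):ℝ)
      ≤ (gam M n l (i:ℕ):ℝ) * α i + (gam M n l k:ℝ) * max (1 - α i) 0 := by
    intro i
    have e0 : ((min (gam M n l (i:ℕ)) (gam M n l k) : ℕ):ℝ)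
        = ((min (gam M n l (i:ℕ)) (gam M n l k) : ℕ):ℝ) * α i
          + ((min (gam M n l (i:ℕ)) (gam M n l k) : ℕ):ℝ) * (1 - α i) := by ring
    have e1 : ((min (gam M n l (i:ℕ)) (gam M n l k) : ℕ):ℝ) * α i ≤ (gam M n l (i:ℕ):ℝ) * α i :=
      mul_le_mul_of_nonneg_right (by exact_mod_cast min_le_left _ _) (hα i)
    have e2 : ((min (gam M n l (i:ℕ)) (gam M n l k) : ℕ):ℝ) * (1 - α i)
        ≤ ((min (gam M n l (i:ℕ)) (gam M n l k) : ℕ):ℝ) * max (1 - α i) 0 :=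
      mul_le_mul_of_nonneg_left (le_max_left _ _) (by positivity)
    have e3 : ((min (gam M n l (i:ℕ)) (gam M n l k) : ℕ):ℝ) * max (1 - α i) 0
        ≤ (gam M n l k:ℝ) * max (1 - α i) 0 :=
      mul_le_mul_of_nonneg_right (by exact_mod_cast min_le_right _ _) (le_max_right _ _)
    linarith
  have hs : ∑ i : Fin l, ((min (gam M n l (i:ℕ)) (gam M n l k) : ℕ):ℝ)
      = (k:ℝ) * (gam M n l k : ℝ) + (dnat M n l k : ℝ) := by
    rw [Fin.sum_univ_eq_sum_range (fun i => ((min (gam M n l i) (gam M n l k) : ℕ):ℝ)) l]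
    rw [← Nat.cast_sum, min_sum M n l k (le_of_lt hk)]
    push_cast
    ring
  have h2 : ∑ i : Fin l, ((min (gam M n l (i:ℕ)) (gam M n l k) : ℕ):ℝ)
      ≤ ∑ i : Fin l, ((gam M n l (i:ℕ):ℝ) * α i)
        + (gam M n l k:ℝ) * ∑ i : Fin l, max (1 - α i) 0 := by
    rw [Finset.mul_sum, ← Finset.sum_add_distrib]
    exact Finset.sum_le_sum (fun i _ => per i)
  have h3 : (gam M n l k:ℝ) * ∑ i : Fin l, max (1 - α i) 0 ≤ (gam M n l k:ℝ) * r :=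
    mul_le_mul_of_nonneg_left hbud (by positivity)
  linarith

lemma max_conv (θ a b : ℝ) (h0 : 0 ≤ θ) (h1 : θ ≤ 1) :
    max ((1-θ)*a + θ*b) 0 ≤ (1-θ) * max a 0 + θ * max b 0 := by
  apply max_le
  · exact add_le_add
      (mul_le_mul_of_nonneg_left (le_max_left _ _) (by linarith))
      (mul_le_mul_of_nonneg_left (le_max_left _ _) h0)
  · exact add_nonneg (mul_nonneg (by linarith) (le_max_right _ _))
      (mul_nonneg h0 (le_max_right _ _))

lemma sum_conv (l : ℕ) (θ : ℝ) (c x y : Fin l → ℝ) :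
    ∑ i : Fin l, c i * ((1-θ)*x i + θ*y i)
      = (1-θ) * ∑ i : Fin l, c i * x i + θ * ∑ i : Fin l, c i * y i := by
  rw [Finset.mul_sum, Finset.mul_sum, ← Finset.sum_add_distrib]
  exact Finset.sum_congr rfl (fun i _ => by ring)

lemma comb_le (m n l : ℕ) (θ : ℝ) (h0 : 0 ≤ θ) (h1 : θ ≤ 1) (x1 x2 y1 y2 : Fin l → ℝ) :
    ∑ i : Fin l, ((n : ℝ) - (i : ℕ)) * ((1-θ)*x1 i + θ*y1 i) +
    ∑ i : Fin l, ((m : ℝ) - n + l - 1 - (i : ℕ)) * ((1-θ)*x2 i + θ*y2 i) +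
    ∑ i : Fin l, ∑ j ∈ Finset.Ioi i, max (((1-θ)*x1 i + θ*y1 i) - ((1-θ)*x2 j + θ*y2 j)) 0
    ≤ (1-θ) * (∑ i : Fin l, ((n : ℝ) - (i : ℕ)) * x1 i +
        ∑ i : Fin l, ((m : ℝ) - n + l - 1 - (i : ℕ)) * x2 i +
        ∑ i : Fin l, ∑ j ∈ Finset.Ioi i, max (x1 i - x2 j) 0)
      + θ * (∑ i : Fin l, ((n : ℝ) - (i : ℕ)) * y1 i +
        ∑ i : Fin l, ((m : ℝ) - n + l - 1 - (i : ℕ)) * y2 i +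
        ∑ i : Fin l, ∑ j ∈ Finset.Ioi i, max (y1 i - y2 j) 0) := by
  have hcross : ∑ i : Fin l, ∑ j ∈ Finset.Ioi i, max (((1-θ)*x1 i + θ*y1 i) - ((1-θ)*x2 j + θ*y2 j)) 0
      ≤ (1-θ) * ∑ i : Fin l, ∑ j ∈ Finset.Ioi i, max (x1 i - x2 j) 0
        + θ * ∑ i : Fin l, ∑ j ∈ Finset.Ioi i, max (y1 i - y2 j) 0 := by
    rw [Finset.mul_sum, Finset.mul_sum, ← Finset.sum_add_distrib]
    apply Finset.sum_le_sum
    intro i _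
    rw [Finset.mul_sum, Finset.mul_sum, ← Finset.sum_add_distrib]
    apply Finset.sum_le_sum
    intro j _
    have : ((1-θ)*x1 i + θ*y1 i) - ((1-θ)*x2 j + θ*y2 j)
        = (1-θ)*(x1 i - x2 j) + θ*(y1 i - y2 j) := by ring
    rw [this]
    exact max_conv θ _ _ h0 h1
  rw [sum_conv l θ (fun i => (n : ℝ) - (i : ℕ)) x1 y1,
    sum_conv l θ (fun i => (m : ℝ) - n + l - 1 - (i : ℕ)) x2 y2]
  linarith

lemma comb_budget (l : ℕ) (θ : ℝ) (h0 : 0 ≤ θ) (h1 : θ ≤ 1) (x y : Fin l → ℝ) :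
    ∑ i : Fin l, max (1 - ((1-θ)*x i + θ*y i)) 0
      ≤ (1-θ) * ∑ i : Fin l, max (1 - x i) 0 + θ * ∑ i : Fin l, max (1 - y i) 0 := by
  rw [Finset.mul_sum, Finset.mul_sum, ← Finset.sum_add_distrib]
  apply Finset.sum_le_sum
  intro i _
  have : (1:ℝ) - ((1-θ)*x i + θ*y i) = (1-θ)*(1 - x i) + θ*(1 - y i) := by ring
  rw [this]
  exact max_conv θ _ _ h0 h1

end AuxDMT

/-- **Theorem 2** (case `min{m,n} ≥ l`), optimization form: the function `r ↦ D(r)` is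
the piecewise-linear interpolation of the points `(k, d(k))`: for `r ∈ [0, l)` with
`k = ⌊r⌋`, `D(r) = (k+1−r)·d(k) + (r−k)·d(k+1)`, and `D(l) = d(l) = 0`. -/
theorem Dval_piecewise_linear {m n l : ℕ} (hl : 0 < l) (hln : l ≤ n) (hnm : n ≤ m) :
    (∀ r : ℝ, 0 ≤ r → r < l →
      Dval m n l hl r =
        ((⌊r⌋ : ℝ) + 1 - r) * dPt m n l ⌊r⌋ + (r - (⌊r⌋ : ℝ)) * dPt m n l (⌊r⌋ + 1)) ∧
    Dval m n l hl l = dPt m n l l ∧ dPt m n l l = 0 := by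
  have hdPtl : dPt m n l (l:ℤ) = 0 := by
    unfold dPt
    have h1 : ((l:ℝ) - ((l:ℤ):ℝ)) = 0 := by push_cast; ring
    have h2 : max ((l : ℝ) - ((m : ℝ) - n) - ((l:ℤ):ℝ)) 0 = 0 := by
      apply max_eq_right
      have : (n:ℝ) ≤ m := by exact_mod_cast hnm
      push_cast
      linarith
    rw [h1, h2]
    norm_num
  refine ⟨?_, ?_, hdPtl⟩
  · -- main interpolation claim
    intro r hr0 hrl
    have hfl0 : 0 ≤ ⌊r⌋ := Int.floor_nonneg.2 hr0
    set k := ⌊r⌋.toNat with hkdef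
    have hkZ : ⌊r⌋ = (k : ℤ) := (Int.toNat_of_nonneg hfl0).symm
    have hkR : ((⌊r⌋ : ℤ) : ℝ) = (k:ℝ) := by rw [hkZ]; push_cast; ring
    have hkler : (k:ℝ) ≤ r := by rw [← hkR]; exact Int.floor_le r
    have hrltk : r < (k:ℝ) + 1 := by rw [← hkR]; exact Int.lt_floor_add_one r
    have hkl : k < l := by
      by_contra h
      push_neg at h
      have : (l:ℝ) ≤ (k:ℝ) := by exact_mod_cast h
      linarith
    have hk1l : k + 1 ≤ l := hkl
    set θ := r - (k:ℝ) with hθdef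
    have hθ0 : 0 ≤ θ := by rw [hθdef]; linarith
    have hθ1 : θ ≤ 1 := by rw [hθdef]; linarith
    -- rewrite the target using dnat
    rw [hkZ, dPt_eq_dnat m n l k (le_of_lt hkl) hln hnm,
      show ((k:ℤ) + 1) = ((k+1 : ℕ) : ℤ) from by push_cast; ring,
      dPt_eq_dnat m n l (k+1) hk1l hln hnm,
      show (((k:ℕ):ℤ):ℝ) = (k:ℝ) from Int.cast_natCast _]
    -- candidate point
    set z : (Fin l → ℝ) × (Fin l → ℝ) :=
      (fun i => (1-θ) * ptv l k i + θ * ptv l (k+1) i,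
       fun i => (1-θ) * ptv l (tk (m-n) l k) i + θ * ptv l (tk (m-n) l (k+1)) i) with hz
    have hzmem : z ∈ {p : (Fin l → ℝ) × (Fin l → ℝ) |
        0 ≤ p.2 ⟨0, hl⟩ ∧ Monotone p.2 ∧ Monotone p.1 ∧
        (∀ i, p.2 i ≤ p.1 i) ∧ ∑ i : Fin l, max (1 - p.1 i) 0 ≤ r} := by
      refine ⟨?_, ?_, ?_, ?_, ?_⟩
      · exact add_nonneg (mul_nonneg (by linarith) (ptv_nonneg _ _ _))
          (mul_nonneg hθ0 (ptv_nonneg _ _ _))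
      · intro i j hij
        exact add_le_add (mul_le_mul_of_nonneg_left (ptv_mono _ _ hij) (by linarith))
          (mul_le_mul_of_nonneg_left (ptv_mono _ _ hij) hθ0)
      · intro i j hij
        exact add_le_add (mul_le_mul_of_nonneg_left (ptv_mono _ _ hij) (by linarith))
          (mul_le_mul_of_nonneg_left (ptv_mono _ _ hij) hθ0)
      · intro i
        exact add_le_add
          (mul_le_mul_of_nonneg_left (ptv_le (m-n) l k (le_of_lt hkl) i) (by linarith))
          (mul_le_mul_of_nonneg_left (ptv_le (m-n) l (k+1) hk1l i) hθ0)
      · calc ∑ i : Fin l, max (1 - z.1 i) 0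
            ≤ (1-θ) * ∑ i : Fin l, max (1 - ptv l k i) 0
              + θ * ∑ i : Fin l, max (1 - ptv l (k+1) i) 0 :=
            comb_budget l θ hθ0 hθ1 _ _
          _ = r := by
            rw [ptv_budget l k (le_of_lt hkl), ptv_budget l (k+1) hk1l]
            push_cast
            rw [hθdef]
            ring
    have hlb : ∀ x ∈ ((fun p : (Fin l → ℝ) × (Fin l → ℝ) =>
        ∑ i : Fin l, ((n : ℝ) - (i : ℕ)) * p.1 i +
        ∑ i : Fin l, ((m : ℝ) - n + l - 1 - (i : ℕ)) * p.2 i +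
        ∑ i : Fin l, ∑ j ∈ Finset.Ioi i, max (p.1 i - p.2 j) 0) ''
      {p : (Fin l → ℝ) × (Fin l → ℝ) |
        0 ≤ p.2 ⟨0, hl⟩ ∧ Monotone p.2 ∧ Monotone p.1 ∧
        (∀ i, p.2 i ≤ p.1 i) ∧ ∑ i : Fin l, max (1 - p.1 i) 0 ≤ r}),
        ((k:ℝ) + 1 - r) * (dnat (m-n) n l k : ℝ)
          + (r - (k:ℝ)) * (dnat (m-n) n l (k+1) : ℝ) ≤ x := by
      rintro x ⟨p, hp, rfl⟩
      obtain ⟨hp1, hp2, hp3, hp4, hp5⟩ := hp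
      have hlt := lb_total m n l k hl hln hnm hkl r p.1 p.2 hp1 hp2 hp4 hp5
      have hsucc : (dnat (m-n) n l k : ℝ)
          = (gam (m-n) n l k : ℝ) + (dnat (m-n) n l (k+1) : ℝ) := by
        exact_mod_cast congrArg (Nat.cast : ℕ → ℝ) (dnat_succ (m-n) n l k hkl)
      dsimp only
      have hVeq : ((k:ℝ) + 1 - r) * (dnat (m-n) n l k : ℝ)
          + (r - (k:ℝ)) * (dnat (m-n) n l (k+1) : ℝ)
          = (dnat (m-n) n l k : ℝ) + (gam (m-n) n l k : ℝ) * ((k:ℝ) - r) := by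
        rw [hsucc]; ring
      rw [hVeq]
      exact hlt
    unfold Dval
    apply le_antisymm
    · -- upper bound via the candidate point
      have hmem2 := Set.mem_image_of_mem (fun p : (Fin l → ℝ) × (Fin l → ℝ) =>
        ∑ i : Fin l, ((n : ℝ) - (i : ℕ)) * p.1 i +
        ∑ i : Fin l, ((m : ℝ) - n + l - 1 - (i : ℕ)) * p.2 i +
        ∑ i : Fin l, ∑ j ∈ Finset.Ioi i, max (p.1 i - p.2 j) 0) hzmem
      have hbdd : BddBelow ((fun p : (Fin l → ℝ) × (Fin l → ℝ) =>
          ∑ i : Fin l, ((n : ℝ) - (i : ℕ)) * p.1 i +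
          ∑ i : Fin l, ((m : ℝ) - n + l - 1 - (i : ℕ)) * p.2 i +
          ∑ i : Fin l, ∑ j ∈ Finset.Ioi i, max (p.1 i - p.2 j) 0) ''
        {p : (Fin l → ℝ) × (Fin l → ℝ) |
          0 ≤ p.2 ⟨0, hl⟩ ∧ Monotone p.2 ∧ Monotone p.1 ∧
          (∀ i, p.2 i ≤ p.1 i) ∧ ∑ i : Fin l, max (1 - p.1 i) 0 ≤ r}) :=
        ⟨_, hlb⟩
      refine (csInf_le hbdd hmem2).trans ?_
      have hval : ∑ i : Fin l, ((n : ℝ) - (i : ℕ)) * z.1 i +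
          ∑ i : Fin l, ((m : ℝ) - n + l - 1 - (i : ℕ)) * z.2 i +
          ∑ i : Fin l, ∑ j ∈ Finset.Ioi i, max (z.1 i - z.2 j) 0
          ≤ (1-θ) * (dnat (m-n) n l k : ℝ) + θ * (dnat (m-n) n l (k+1) : ℝ) := by
        calc ∑ i : Fin l, ((n : ℝ) - (i : ℕ)) * z.1 i +
            ∑ i : Fin l, ((m : ℝ) - n + l - 1 - (i : ℕ)) * z.2 i +
            ∑ i : Fin l, ∑ j ∈ Finset.Ioi i, max (z.1 i - z.2 j) 0
            ≤ (1-θ) * (∑ i : Fin l, ((n : ℝ) - (i : ℕ)) * ptv l k i +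
                ∑ i : Fin l, ((m : ℝ) - n + l - 1 - (i : ℕ)) * ptv l (tk (m-n) l k) i +
                ∑ i : Fin l, ∑ j ∈ Finset.Ioi i, max (ptv l k i - ptv l (tk (m-n) l k) j) 0)
              + θ * (∑ i : Fin l, ((n : ℝ) - (i : ℕ)) * ptv l (k+1) i +
                ∑ i : Fin l, ((m : ℝ) - n + l - 1 - (i : ℕ)) * ptv l (tk (m-n) l (k+1)) i +
                ∑ i : Fin l, ∑ j ∈ Finset.Ioi i,
                  max (ptv l (k+1) i - ptv l (tk (m-n) l (k+1)) j) 0) :=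
            comb_le m n l θ hθ0 hθ1 _ _ _ _
          _ = (1-θ) * (dnat (m-n) n l k : ℝ) + θ * (dnat (m-n) n l (k+1) : ℝ) := by
            rw [ptv_value m n l k (le_of_lt hkl) hln hnm, ptv_value m n l (k+1) hk1l hln hnm]
      refine hval.trans ?_
      rw [hθdef]
      linarith
    · -- lower bound
      apply le_csInf
      · exact ⟨_, Set.mem_image_of_mem _ hzmem⟩
      · exact hlb
  · -- value at r = l
    rw [hdPtl]
    have hmem : ((fun _ => 0, fun _ => 0) : (Fin l → ℝ) × (Fin l → ℝ)) ∈
        {p : (Fin l → ℝ) × (Fin l → ℝ) |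
          0 ≤ p.2 ⟨0, hl⟩ ∧ Monotone p.2 ∧ Monotone p.1 ∧
          (∀ i, p.2 i ≤ p.1 i) ∧ ∑ i : Fin l, max (1 - p.1 i) 0 ≤ (l:ℝ)} := by
      refine ⟨le_refl 0, monotone_const, monotone_const, fun i => le_refl 0, ?_⟩
      have h1 : ∑ i : Fin l, max ((1:ℝ) - (fun _ : Fin l => (0:ℝ)) i) 0 = (l:ℝ) := by
        norm_num
      rw [h1]
    have hlb0 : ∀ x ∈ ((fun p : (Fin l → ℝ) × (Fin l → ℝ) =>
        ∑ i : Fin l, ((n : ℝ) - (i : ℕ)) * p.1 i +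
        ∑ i : Fin l, ((m : ℝ) - n + l - 1 - (i : ℕ)) * p.2 i +
        ∑ i : Fin l, ∑ j ∈ Finset.Ioi i, max (p.1 i - p.2 j) 0) ''
      {p : (Fin l → ℝ) × (Fin l → ℝ) |
        0 ≤ p.2 ⟨0, hl⟩ ∧ Monotone p.2 ∧ Monotone p.1 ∧
        (∀ i, p.2 i ≤ p.1 i) ∧ ∑ i : Fin l, max (1 - p.1 i) 0 ≤ (l:ℝ)}), (0:ℝ) ≤ x := by
      rintro x ⟨p, hp, rfl⟩
      obtain ⟨hp1, hp2, hp3, hp4, hp5⟩ := hp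
      dsimp only
      have hβ : ∀ j, 0 ≤ p.2 j := fun j => hp1.trans (hp2 (by simp [Fin.le_def]))
      have hα : ∀ i, 0 ≤ p.1 i := fun i => (hβ i).trans (hp4 i)
      have t1 : (0:ℝ) ≤ ∑ i : Fin l, ((n : ℝ) - (i : ℕ)) * p.1 i := by
        apply Finset.sum_nonneg
        intro i _
        apply mul_nonneg _ (hα i)
        have e1 : ((i:ℕ):ℝ) < (l:ℝ) := by exact_mod_cast i.isLt
        have e2 : (l:ℝ) ≤ (n:ℝ) := by exact_mod_cast hln
        linarith
      have t2 : (0:ℝ) ≤ ∑ i : Fin l, ((m : ℝ) - n + l - 1 - (i : ℕ)) * p.2 i := by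
        apply Finset.sum_nonneg
        intro i _
        apply mul_nonneg _ (hβ i)
        have e1 : ((i:ℕ):ℝ) + 1 ≤ (l:ℝ) := by exact_mod_cast i.isLt
        have e2 : (n:ℝ) ≤ (m:ℝ) := by exact_mod_cast hnm
        linarith
      have t3 : (0:ℝ) ≤ ∑ i : Fin l, ∑ j ∈ Finset.Ioi i, max (p.1 i - p.2 j) 0 :=
        Finset.sum_nonneg (fun i _ => Finset.sum_nonneg (fun j _ => le_max_right _ _))
      linarith
    have hval0 : (fun p : (Fin l → ℝ) × (Fin l → ℝ) =>
        ∑ i : Fin l, ((n : ℝ) - (i : ℕ)) * p.1 i +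
        ∑ i : Fin l, ((m : ℝ) - n + l - 1 - (i : ℕ)) * p.2 i +
        ∑ i : Fin l, ∑ j ∈ Finset.Ioi i, max (p.1 i - p.2 j) 0)
          ((fun _ => 0, fun _ => 0) : (Fin l → ℝ) × (Fin l → ℝ)) = 0 := by
      simp
    unfold Dval
    apply le_antisymm
    · have h := csInf_le ⟨(0:ℝ), hlb0⟩ (Set.mem_image_of_mem _ hmem)
      simpa using h
    · exact le_csInf ⟨_, Set.mem_image_of_mem _ hmem⟩ hlb0
end
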